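/- arXiv:0706.0702 — 6 statements merged into one kernel-verified Lean document; each statement's English description precedes it below -/
import Mathlib

section
/- Let p be a prime and let A be a nonempty subset of the field F_p of residue classes modulo p. Then |A+A| · |A·A| ≥ (1/4) · min{ p·|A| , |A|^4 / p }, where A+A = {a+b : a,b ∈ A} and A·A = {a·b : a,b ∈ A}. -/
open Finset Complex Pointwise

namespace Garaev

variable {p : ℕ} [Fact p.Prime]

noncomputable def ψ (p : ℕ) [NeZero p] : AddChar (ZMod p) ℂ := ZMod.stdAddChar

lemma norm_ψ (x : ZMod p) : ‖ψ p x‖ = 1 := by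
  rw [ψ, ZMod.stdAddChar_apply, Circle.norm_coe]

lemma conj_ψ (x : ZMod p) : (starRingEnd ℂ) (ψ p x) = ψ p (-x) := by
  have h := AddChar.starComp_eq_inv (R := ZMod p) (φ := ψ p)
    (by rw [ZMod.ringChar_zmod_n]; exact (Fact.out : p.Prime).pos)
  calc (starRingEnd ℂ) (ψ p x) = ((starRingEnd ℂ).compAddChar (ψ p)) x := rfl
    _ = (ψ p)⁻¹ x := by rw [h]
    _ = ψ p (-x) := AddChar.inv_apply _ _

lemma orth (b : ZMod p) : ∑ t : ZMod p, ψ p (t * b) = if b = 0 then (p : ℂ) else 0 := by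
  have := AddChar.sum_mulShift (ψ := ψ p) b (ZMod.isPrimitive_stdAddChar p)
  rw [ZMod.card p] at this
  rw [this]; split <;> simp

lemma mul_conj_eq (x y : ZMod p) : ψ p x * (starRingEnd ℂ) (ψ p y) = ψ p (x - y) := by
  rw [conj_ψ, ← AddChar.map_add_eq_mul, sub_eq_add_neg]

/-- Parseval (complex form helper): pointwise expansion. -/
lemma parseval (F : Finset (ZMod p)) :
    ∑ t : ZMod p, ‖∑ s ∈ F, ψ p (t * s)‖ ^ 2 = (p : ℝ) * F.card := by
  have key : ∑ t : ZMod p, (∑ s ∈ F, ψ p (t * s)) * (starRingEnd ℂ) (∑ s ∈ F, ψ p (t * s))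
      = (p : ℂ) * F.card := by
    have h1 : ∀ t : ZMod p, (∑ s ∈ F, ψ p (t * s)) * (starRingEnd ℂ) (∑ s ∈ F, ψ p (t * s))
        = ∑ s ∈ F, ∑ s' ∈ F, ψ p (t * (s - s')) := by
      intro t
      rw [map_sum, Finset.sum_mul_sum]
      refine Finset.sum_congr rfl fun s _ => Finset.sum_congr rfl fun s' _ => ?_
      rw [mul_conj_eq]; ring_nf
    simp_rw [h1]
    rw [Finset.sum_comm]
    have h2 : ∀ s ∈ F, ∑ t : ZMod p, ∑ s' ∈ F, ψ p (t * (s - s')) = (p : ℂ) := by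
      intro s hs
      rw [Finset.sum_comm]
      have h3 : ∀ s' ∈ F, ∑ t : ZMod p, ψ p (t * (s - s')) = if s = s' then (p:ℂ) else 0 := by
        intro s' _
        rw [orth]; simp [sub_eq_zero]
      rw [Finset.sum_congr rfl h3, Finset.sum_ite_eq F s (fun _ => (p:ℂ)), if_pos hs]
    rw [Finset.sum_congr rfl h2, Finset.sum_const, nsmul_eq_mul, mul_comm]
  have h4 : ∀ t : ZMod p, (∑ s ∈ F, ψ p (t * s)) * (starRingEnd ℂ) (∑ s ∈ F, ψ p (t * s))
      = ((‖∑ s ∈ F, ψ p (t * s)‖ ^ 2 : ℝ) : ℂ) := by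
    intro t
    rw [Complex.mul_conj]
    norm_cast
    rw [Complex.normSq_eq_norm_sq]
  simp_rw [h4] at key
  exact_mod_cast key

/-- Bilinear exponential sum bound. -/
lemma bilinear (X Y : Finset (ZMod p)) {t : ZMod p} (ht : t ≠ 0) :
    ‖∑ x ∈ X, ∑ y ∈ Y, ψ p (t * (x * y))‖ ≤
      Real.sqrt ((p : ℝ) * X.card * Y.card) := by
  have hfull : ∑ x : ZMod p, ‖∑ y ∈ Y, ψ p (t * (x * y))‖ ^ 2 = (p : ℝ) * Y.card := by
    have hb : Function.Bijective (fun x : ZMod p => t * x) :=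
      (Equiv.mulLeft₀ t ht).bijective
    calc ∑ x : ZMod p, ‖∑ y ∈ Y, ψ p (t * (x * y))‖ ^ 2
        = ∑ x : ZMod p, ‖∑ y ∈ Y, ψ p ((t * x) * y)‖ ^ 2 := by
          simp_rw [mul_assoc]
      _ = ∑ u : ZMod p, ‖∑ y ∈ Y, ψ p (u * y)‖ ^ 2 :=
          Fintype.sum_bijective (fun x : ZMod p => t * x) hb
            (fun x : ZMod p => ‖∑ y ∈ Y, ψ p ((t * x) * y)‖ ^ 2)
            (fun u : ZMod p => ‖∑ y ∈ Y, ψ p (u * y)‖ ^ 2) (fun x => rfl)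
      _ = (p : ℝ) * Y.card := parseval Y
  have h1 : ‖∑ x ∈ X, ∑ y ∈ Y, ψ p (t * (x * y))‖ ≤
      ∑ x ∈ X, ‖∑ y ∈ Y, ψ p (t * (x * y))‖ := norm_sum_le _ _
  have h2 : (∑ x ∈ X, ‖∑ y ∈ Y, ψ p (t * (x * y))‖) ^ 2 ≤
      (X.card : ℝ) * ∑ x ∈ X, ‖∑ y ∈ Y, ψ p (t * (x * y))‖ ^ 2 :=
    sq_sum_le_card_mul_sum_sq
  have h3 : ∑ x ∈ X, ‖∑ y ∈ Y, ψ p (t * (x * y))‖ ^ 2 ≤ (p : ℝ) * Y.card := by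
    rw [← hfull]
    exact Finset.sum_le_sum_of_subset_of_nonneg (Finset.subset_univ X)
      (fun _ _ _ => by positivity)
  have h4 : (∑ x ∈ X, ‖∑ y ∈ Y, ψ p (t * (x * y))‖) ^ 2 ≤ (p : ℝ) * X.card * Y.card := by
    calc (∑ x ∈ X, ‖∑ y ∈ Y, ψ p (t * (x * y))‖) ^ 2
        ≤ (X.card : ℝ) * ((p:ℝ) * Y.card) :=
          h2.trans (by exact mul_le_mul_of_nonneg_left h3 (by positivity))
      _ = (p : ℝ) * X.card * Y.card := by ring
  calc ‖∑ x ∈ X, ∑ y ∈ Y, ψ p (t * (x * y))‖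
      ≤ ∑ x ∈ X, ‖∑ y ∈ Y, ψ p (t * (x * y))‖ := h1
    _ ≤ Real.sqrt ((p : ℝ) * X.card * Y.card) := by
        rw [← Real.sqrt_sq (by positivity : (0:ℝ) ≤ ∑ x ∈ X, ‖∑ y ∈ Y, ψ p (t * (x * y))‖)]
        exact Real.sqrt_le_sqrt h4

/-- Fourier bound on the number of solutions of `x*y + c = s`. -/
lemma count_bound (X Y C S : Finset (ZMod p)) :
    ((((X ×ˢ Y) ×ˢ C ×ˢ S).filter fun q => q.1.1 * q.1.2 + q.2.1 = q.2.2).card : ℝ)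
      ≤ ((X.card : ℝ) * Y.card * C.card * S.card) / p
        + Real.sqrt ((p : ℝ) * X.card * Y.card * C.card * S.card) := by
  classical
  set T : ℕ := (((X ×ˢ Y) ×ˢ C ×ˢ S).filter fun q => q.1.1 * q.1.2 + q.2.1 = q.2.2).card with hT
  set Bt : ZMod p → ℂ := fun t => ∑ x ∈ X, ∑ y ∈ Y, ψ p (t * (x * y)) with hBt
  set Fc : ZMod p → ℂ := fun t => ∑ c ∈ C, ψ p (t * c) with hFc
  set Fs : ZMod p → ℂ := fun t => ∑ s ∈ S, ψ p (t * s) with hFs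
  have hP : (p : ℂ) * T = ∑ t : ZMod p, Bt t * (Fc t * (starRingEnd ℂ) (Fs t)) := by
    have e1 : (p : ℂ) * T = ∑ q ∈ (X ×ˢ Y) ×ˢ C ×ˢ S,
        if q.1.1 * q.1.2 + q.2.1 = q.2.2 then (p : ℂ) else 0 := by
      rw [hT, Finset.card_filter]
      push_cast
      rw [Finset.mul_sum]
      exact Finset.sum_congr rfl fun q _ => by split <;> simp
    have key : ∀ q : (ZMod p × ZMod p) × ZMod p × ZMod p,
        (if q.1.1 * q.1.2 + q.2.1 = q.2.2 then (p : ℂ) else 0)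
          = ∑ t : ZMod p,
              ψ p (t * (q.1.1 * q.1.2)) * (ψ p (t * q.2.1) * (starRingEnd ℂ) (ψ p (t * q.2.2))) := by
      intro q
      have e2 : ∀ t : ZMod p,
          ψ p (t * (q.1.1 * q.1.2)) * (ψ p (t * q.2.1) * (starRingEnd ℂ) (ψ p (t * q.2.2)))
            = ψ p (t * (q.1.1 * q.1.2 + q.2.1 - q.2.2)) := by
        intro t
        rw [mul_conj_eq, ← AddChar.map_add_eq_mul]
        congr 1
        ring
      simp_rw [e2, orth (q.1.1 * q.1.2 + q.2.1 - q.2.2)]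
      simp [sub_eq_zero]
    rw [e1]
    simp_rw [key]
    rw [Finset.sum_comm]
    refine Finset.sum_congr rfl fun t _ => ?_
    have e3 : Fc t * (starRingEnd ℂ) (Fs t)
        = ∑ b ∈ C ×ˢ S, ψ p (t * b.1) * (starRingEnd ℂ) (ψ p (t * b.2)) := by
      rw [hFc, hFs, map_sum, Finset.sum_mul_sum]
      exact (Finset.sum_product C S
        (fun b => ψ p (t * b.1) * (starRingEnd ℂ) (ψ p (t * b.2)))).symm
    calc (∑ q ∈ (X ×ˢ Y) ×ˢ C ×ˢ S,
            ψ p (t * (q.1.1 * q.1.2)) * (ψ p (t * q.2.1) * (starRingEnd ℂ) (ψ p (t * q.2.2))))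
        = ∑ a ∈ X ×ˢ Y, ∑ b ∈ C ×ˢ S,
            ψ p (t * (a.1 * a.2)) * (ψ p (t * b.1) * (starRingEnd ℂ) (ψ p (t * b.2))) :=
          Finset.sum_product _ _ _
      _ = (∑ a ∈ X ×ˢ Y, ψ p (t * (a.1 * a.2)))
            * (∑ b ∈ C ×ˢ S, ψ p (t * b.1) * (starRingEnd ℂ) (ψ p (t * b.2))) :=
          (Finset.sum_mul_sum _ _ _ _).symm
      _ = Bt t * (Fc t * (starRingEnd ℂ) (Fs t)) := by
          rw [e3, hBt]
          congr 1
          exact Finset.sum_product _ _ _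
  -- split off the `t = 0` term
  have hf0 : Bt 0 * (Fc 0 * (starRingEnd ℂ) (Fs 0))
      = ((X.card : ℂ) * Y.card) * ((C.card : ℂ) * S.card) := by
    simp [hBt, hFc, hFs]
  have hsplit : (Bt 0 * (Fc 0 * (starRingEnd ℂ) (Fs 0)))
      + ∑ t ∈ Finset.univ.erase (0 : ZMod p), Bt t * (Fc t * (starRingEnd ℂ) (Fs t))
      = ∑ t : ZMod p, Bt t * (Fc t * (starRingEnd ℂ) (Fs t)) :=
    Finset.add_sum_erase Finset.univ
      (fun t : ZMod p => Bt t * (Fc t * (starRingEnd ℂ) (Fs t))) (Finset.mem_univ 0)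
  -- norm bound on the error term
  have herr : ‖∑ t ∈ Finset.univ.erase (0 : ZMod p), Bt t * (Fc t * (starRingEnd ℂ) (Fs t))‖
      ≤ Real.sqrt ((p : ℝ) * X.card * Y.card) * (Real.sqrt ((p : ℝ) * C.card)
          * Real.sqrt ((p : ℝ) * S.card)) := by
    have step1 : ‖∑ t ∈ Finset.univ.erase (0 : ZMod p), Bt t * (Fc t * (starRingEnd ℂ) (Fs t))‖
        ≤ ∑ t ∈ Finset.univ.erase (0 : ZMod p),
            Real.sqrt ((p : ℝ) * X.card * Y.card) * (‖Fc t‖ * ‖Fs t‖) := by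
      refine (norm_sum_le _ _).trans (Finset.sum_le_sum fun t ht => ?_)
      have ht0 : t ≠ 0 := (Finset.mem_erase.mp ht).1
      rw [norm_mul, norm_mul, RingHomIsometric.norm_map]
      gcongr
      exact bilinear X Y ht0
    have step2 : ∑ t ∈ Finset.univ.erase (0 : ZMod p), ‖Fc t‖ * ‖Fs t‖
        ≤ ∑ t : ZMod p, ‖Fc t‖ * ‖Fs t‖ :=
      Finset.sum_le_sum_of_subset_of_nonneg (Finset.subset_univ _)
        (fun _ _ _ => by positivity)
    have step3 : ∑ t : ZMod p, ‖Fc t‖ * ‖Fs t‖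
        ≤ Real.sqrt ((p : ℝ) * C.card) * Real.sqrt ((p : ℝ) * S.card) := by
      have cs := Real.sum_mul_le_sqrt_mul_sqrt Finset.univ (fun t => ‖Fc t‖) (fun t => ‖Fs t‖)
      rw [show ∑ t : ZMod p, ‖Fc t‖ ^ 2 = (p : ℝ) * C.card from parseval C,
        show ∑ t : ZMod p, ‖Fs t‖ ^ 2 = (p : ℝ) * S.card from parseval S] at cs
      exact cs
    calc ‖∑ t ∈ Finset.univ.erase (0 : ZMod p), Bt t * (Fc t * (starRingEnd ℂ) (Fs t))‖
        ≤ ∑ t ∈ Finset.univ.erase (0 : ZMod p),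
            Real.sqrt ((p : ℝ) * X.card * Y.card) * (‖Fc t‖ * ‖Fs t‖) := step1
      _ = Real.sqrt ((p : ℝ) * X.card * Y.card)
            * ∑ t ∈ Finset.univ.erase (0 : ZMod p), ‖Fc t‖ * ‖Fs t‖ := by
          rw [Finset.mul_sum]
      _ ≤ Real.sqrt ((p : ℝ) * X.card * Y.card)
            * (Real.sqrt ((p : ℝ) * C.card) * Real.sqrt ((p : ℝ) * S.card)) := by
          exact mul_le_mul_of_nonneg_left (step2.trans step3) (Real.sqrt_nonneg _)
  -- extract the real inequality
  have hreal : (p : ℝ) * T ≤ (X.card : ℝ) * Y.card * C.card * S.card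
      + Real.sqrt ((p : ℝ) * X.card * Y.card) * (Real.sqrt ((p : ℝ) * C.card)
          * Real.sqrt ((p : ℝ) * S.card)) := by
    have hD : (((p : ℝ) * T - (X.card : ℝ) * Y.card * C.card * S.card : ℝ) : ℂ)
        = ∑ t ∈ Finset.univ.erase (0 : ZMod p), Bt t * (Fc t * (starRingEnd ℂ) (Fs t)) := by
      rw [← hsplit, hf0] at hP
      push_cast
      rw [hP]
      ring
    have := herr
    rw [← hD, Complex.norm_real] at this
    have h2 : (p : ℝ) * T - (X.card : ℝ) * Y.card * C.card * S.card
        ≤ |((p : ℝ) * T - (X.card : ℝ) * Y.card * C.card * S.card)| := le_abs_self _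
    rw [Real.norm_eq_abs] at this
    linarith
  -- combine square roots and divide by p
  have hp0 : (0 : ℝ) < p := by exact_mod_cast (Fact.out : p.Prime).pos
  have hsq : Real.sqrt ((p : ℝ) * X.card * Y.card) * (Real.sqrt ((p : ℝ) * C.card)
      * Real.sqrt ((p : ℝ) * S.card))
      = (p : ℝ) * Real.sqrt ((p : ℝ) * X.card * Y.card * C.card * S.card) := by
    rw [← Real.sqrt_mul (by positivity), ← Real.sqrt_mul (by positivity)]
    rw [show (p : ℝ) * X.card * Y.card * ((p : ℝ) * C.card * ((p : ℝ) * S.card))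
        = (p : ℝ) ^ 2 * ((p : ℝ) * X.card * Y.card * C.card * S.card) by ring]
    rw [Real.sqrt_mul (by positivity), Real.sqrt_sq hp0.le]
  rw [hsq] at hreal
  have h2 : (T : ℝ) ≤ ((X.card : ℝ) * Y.card * C.card * S.card
      + (p : ℝ) * Real.sqrt ((p : ℝ) * X.card * Y.card * C.card * S.card)) / p := by
    rw [le_div_iff₀ hp0]
    linarith [hreal]
  rwa [add_div, mul_div_cancel_left₀ _ (ne_of_gt hp0)] at h2

/-- Injection lower bound for the number of solutions. -/
lemma lower (A B : Finset (ZMod p)) (hBA : B ⊆ A) (h0 : (0 : ZMod p) ∉ B) :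
    A.card * B.card * A.card ≤
      ((((A * A) ×ˢ B⁻¹) ×ˢ A ×ˢ (A + A)).filter
        fun q => q.1.1 * q.1.2 + q.2.1 = q.2.2).card := by
  classical
  have key := Finset.card_le_card_of_injOn
    (s := A ×ˢ B ×ˢ A)
    (t := (((A * A) ×ˢ B⁻¹) ×ˢ A ×ˢ (A + A)).filter fun q => q.1.1 * q.1.2 + q.2.1 = q.2.2)
    (fun r => ((r.1 * r.2.1, r.2.1⁻¹), (r.2.2, r.1 + r.2.2)))
    (by
      intro r hr
      rw [Finset.mem_coe, Finset.mem_product, Finset.mem_product] at hr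
      obtain ⟨ha, hb, hc⟩ := hr
      have hb0 : r.2.1 ≠ 0 := fun h => h0 (h ▸ hb)
      rw [Finset.mem_coe, Finset.mem_filter]
      constructor
      · rw [Finset.mem_product, Finset.mem_product, Finset.mem_product]
        exact ⟨⟨Finset.mul_mem_mul ha (hBA hb), Finset.inv_mem_inv hb⟩,
          hc, Finset.add_mem_add ha hc⟩
      · show r.1 * r.2.1 * r.2.1⁻¹ + r.2.2 = r.1 + r.2.2
        rw [mul_assoc, mul_inv_cancel₀ hb0, mul_one])
    (by
      intro r hr r' hr' h
      simp only [Prod.mk.injEq] at h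
      obtain ⟨⟨-, h2⟩, h3, h4⟩ := h
      have hb : r.2.1 = r'.2.1 := inv_injective h2
      have ha : r.1 = r'.1 := by
        have := h4
        rw [h3] at this
        exact add_right_cancel this
      exact Prod.ext ha (Prod.ext hb h3))
  rwa [Finset.card_product, Finset.card_product, ← mul_assoc] at key

end Garaev

set_option maxHeartbeats 1000000 in
open Garaev in
theorem sum_product_prime_field (p : ℕ) (hp : p.Prime) (A : Finset (ZMod p))
    (hA : A.Nonempty) :
    ((A + A).card * (A * A).card : ℝ) ≥
      (1 / 4) * min ((p : ℝ) * A.card) ((A.card : ℝ) ^ 4 / p) := by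
  haveI : Fact p.Prime := ⟨hp⟩
  have hp0 : (0 : ℝ) < p := by exact_mod_cast hp.pos
  have hS1 : 1 ≤ (A + A).card := Finset.card_pos.mpr (hA.add hA)
  have hP1 : 1 ≤ (A * A).card := Finset.card_pos.mpr (hA.mul hA)
  have hn1 : 1 ≤ A.card := Finset.card_pos.mpr hA
  rcases eq_or_lt_of_le hn1 with hn | hn2
  · -- |A| = 1
    have hmin : min ((p : ℝ) * A.card) ((A.card : ℝ) ^ 4 / p) ≤ 1 := by
      refine (min_le_right _ _).trans ?_
      rw [← hn]
      push_cast
      rw [one_pow]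
      rw [div_le_one hp0]
      exact_mod_cast hp.one_lt.le
    have : (1 : ℝ) ≤ ((A + A).card : ℝ) * (A * A).card := by
      have a1 : (1 : ℝ) ≤ ((A + A).card : ℝ) := by exact_mod_cast hS1
      have a2 : (1 : ℝ) ≤ ((A * A).card : ℝ) := by exact_mod_cast hP1
      nlinarith
    nlinarith [this, hmin]
  · -- |A| ≥ 2
    set n := A.card with hn
    set B := A.erase 0 with hB
    have hBA : B ⊆ A := Finset.erase_subset _ _
    have h0B : (0 : ZMod p) ∉ B := Finset.notMem_erase _ _
    set m := B.card with hm
    have hmn : n - 1 ≤ m := Finset.pred_card_le_card_erase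
    have hmnR : (n : ℝ) - 1 ≤ (m : ℝ) := by
      have : ((n - 1 : ℕ) : ℝ) ≤ (m : ℝ) := by exact_mod_cast hmn
      rw [Nat.cast_sub hn1] at this
      simpa using this
    have hnR2 : (2 : ℝ) ≤ (n : ℝ) := by exact_mod_cast hn2
    have hmR1 : (1 : ℝ) ≤ (m : ℝ) := by linarith
    have low := lower A B hBA h0B
    have up := count_bound (A * A) B⁻¹ A (A + A)
    rw [Finset.card_inv] at up
    set T := ((((A * A) ×ˢ B⁻¹) ×ˢ A ×ˢ (A + A)).filter
      fun q => q.1.1 * q.1.2 + q.2.1 = q.2.2).card with hT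
    -- real abbreviations
    set Sr := ((A + A).card : ℝ) with hSr
    set Pr := ((A * A).card : ℝ) with hPr
    have lowR : (n : ℝ) * m * n ≤ (T : ℝ) := by exact_mod_cast low
    by_contra hcon
    push_neg at hcon
    have h1 : Sr * Pr < (1 / 4) * ((p : ℝ) * n) :=
      lt_of_lt_of_le hcon (by
        have := min_le_left ((p : ℝ) * n) ((n : ℝ) ^ 4 / p)
        linarith [this])
    have h2 : Sr * Pr < (1 / 4) * ((n : ℝ) ^ 4 / p) :=
      lt_of_lt_of_le hcon (by
        have := min_le_right ((p : ℝ) * n) ((n : ℝ) ^ 4 / p)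
        linarith [this])
    set R := Real.sqrt ((p : ℝ) * Pr * m * n * Sr) with hR
    have hR0 : 0 ≤ R := Real.sqrt_nonneg _
    have hR2 : R ^ 2 = (p : ℝ) * Pr * m * n * Sr := by
      rw [hR, Real.sq_sqrt (by positivity)]
    have upR : (T : ℝ) ≤ Pr * m * n * Sr / p + R := up
    -- multiply through by p
    have upR' : (p : ℝ) * T ≤ Pr * m * n * Sr + (p : ℝ) * R := by
      have h' := mul_le_mul_of_nonneg_left upR hp0.le
      have e : (p : ℝ) * (Pr * m * n * Sr / p + R) = Pr * m * n * Sr + (p : ℝ) * R := by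
        field_simp
      rw [e] at h'
      exact h'
    -- Pr * m * n * Sr = (Sr * Pr) * (m * n) < (1/4) * p * n * (m * n)
    have e1 : Pr * m * n * Sr < (1 / 4) * ((p : ℝ) * n) * ((m : ℝ) * n) := by
      have hmn0 : (0 : ℝ) < (m : ℝ) * n := mul_pos (by linarith) (by linarith)
      linarith [mul_lt_mul_of_pos_right h1 hmn0]
    have hRlow : (3 / 4) * ((n : ℝ) * n * m) < R := by
      have hpT : (p : ℝ) * ((n : ℝ) * m * n) ≤ (p : ℝ) * T :=
        mul_le_mul_of_nonneg_left lowR hp0.le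
      have : (p : ℝ) * ((3 / 4) * ((n : ℝ) * n * m)) < (p : ℝ) * R := by
        linarith [hpT, upR', e1]
      exact (mul_lt_mul_iff_right₀ hp0).mp this
    have hRsq : R ^ 2 < (1 / 4) * ((n : ℝ) ^ 4 * ((m : ℝ) * n)) := by
      have hpmn0 : (0 : ℝ) < (p : ℝ) * ((m : ℝ) * n) :=
        mul_pos hp0 (mul_pos (by linarith) (by linarith))
      have := mul_lt_mul_of_pos_right h2 hpmn0
      have e2 : (1 / 4) * ((n : ℝ) ^ 4 / p) * ((p : ℝ) * ((m : ℝ) * n))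
          = (1 / 4) * ((n : ℝ) ^ 4 * ((m : ℝ) * n)) := by
        field_simp
      rw [e2] at this
      linarith [this, hR2.le, hR2.ge]
    have h49 : 4 * (n : ℝ) ≤ 9 * (m : ℝ) := by linarith
    have hsq : ((3 / 4) * ((n : ℝ) * n * m)) ^ 2 < R ^ 2 := by
      have h30 : (0 : ℝ) ≤ (3 / 4) * ((n : ℝ) * n * m) := by nlinarith [hnR2, hmR1]
      exact pow_lt_pow_left₀ hRlow h30 two_ne_zero
    linarith [hsq, hRsq,
      mul_le_mul_of_nonneg_left h49
        (show (0 : ℝ) ≤ (n : ℝ) ^ 4 * m / 16 by nlinarith [hnR2, hmR1])]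
end

section
/- Let p be a prime and let A ⊆ F_p satisfy |A| ≥ p^{2/3}. Then max{ |A+A| , |A·A| } ≥ (1/2) · (p·|A|)^{1/2}. -/
open Pointwise

namespace SumProdAux

open Finset Complex

variable {p : ℕ} [NeZero p]

local notation "ψ" => ZMod.stdAddChar (N := p)

lemma norm_psi (x : ZMod p) : ‖ψ x‖ = 1 := by
  rw [ZMod.stdAddChar_apply]
  exact Circle.norm_coe _

lemma psi_ne_zero (x : ZMod p) : ψ x ≠ 0 := by
  intro h
  have := norm_psi x
  rw [h] at this
  simp at this

lemma conj_psi (x : ZMod p) : (starRingEnd ℂ) (ψ x) = ψ (-x) := by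
  have h1 : ψ x * (starRingEnd ℂ) (ψ x) = 1 := by
    rw [Complex.mul_conj, Complex.normSq_eq_norm_sq, norm_psi]
    norm_num
  have h2 : ψ x * ψ (-x) = 1 := by
    rw [← AddChar.map_add_eq_mul, add_neg_cancel, AddChar.map_zero_eq_one]
  exact mul_left_cancel₀ (psi_ne_zero x) (h1.trans h2.symm)

lemma sum_psi (b : ZMod p) : ∑ t : ZMod p, ψ (t * b) = if b = 0 then (p : ℂ) else 0 := by
  have := AddChar.sum_mulShift b (ZMod.isPrimitive_stdAddChar p)
  rw [ZMod.card] at this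
  push_cast at this
  exact this

noncomputable def fS (X : Finset (ZMod p)) (t : ZMod p) : ℂ := ∑ x ∈ X, ψ (t * x)

lemma fS_zero (X : Finset (ZMod p)) : fS X 0 = (X.card : ℂ) := by
  simp [fS, AddChar.map_zero_eq_one]

lemma parseval (X : Finset (ZMod p)) :
    ∑ t : ZMod p, ‖fS X t‖ ^ 2 = (p : ℝ) * X.card := by
  have key : ∑ t : ZMod p, fS X t * (starRingEnd ℂ) (fS X t) = (p : ℂ) * X.card := by
    have expand : ∀ t : ZMod p, fS X t * (starRingEnd ℂ) (fS X t)
        = ∑ x ∈ X, ∑ y ∈ X, ψ (t * (x - y)) := by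
      intro t
      rw [fS, map_sum, Finset.sum_mul_sum]
      refine Finset.sum_congr rfl fun x _ => Finset.sum_congr rfl fun y _ => ?_
      rw [conj_psi, ← AddChar.map_add_eq_mul]
      congr 1
      ring
    simp_rw [expand]
    rw [Finset.sum_comm]
    have swap2 : ∀ x : ZMod p, ∑ t : ZMod p, ∑ y ∈ X, ψ (t * (x - y))
        = ∑ y ∈ X, ∑ t : ZMod p, ψ (t * (x - y)) := fun x => Finset.sum_comm
    simp_rw [swap2, sum_psi, sub_eq_zero]
    simp [Finset.sum_ite_eq, mul_comm]
  have cast_eq : ((∑ t : ZMod p, ‖fS X t‖ ^ 2 : ℝ) : ℂ) = (((p : ℝ) * X.card : ℝ) : ℂ) := by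
    push_cast
    rw [← key]
    refine Finset.sum_congr rfl fun t _ => ?_
    calc ((‖fS X t‖ : ℂ))^2 = ((‖fS X t‖^2 : ℝ) : ℂ) := by push_cast; ring
    _ = fS X t * (starRingEnd ℂ) (fS X t) := by
        rw [Complex.mul_conj, Complex.normSq_eq_norm_sq]
  exact_mod_cast cast_eq

end SumProdAux

namespace SumProdAux

open Finset Complex

variable {p : ℕ} [Fact p.Prime]

local notation "ψ" => ZMod.stdAddChar (N := p)

lemma g_bound (C D : Finset (ZMod p)) {t : ZMod p} (ht : t ≠ 0) :
    ‖∑ c ∈ C, ∑ d ∈ D, ψ (t * (c * d))‖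
      ≤ Real.sqrt ((C.card : ℝ) * ((p : ℝ) * D.card)) := by
  set h : ZMod p → ℂ := fun c => ∑ d ∈ D, ψ (t * (c * d)) with hh
  have huniv : ∑ c : ZMod p, ‖h c‖ ^ 2 = (p : ℝ) * D.card := by
    have key : ∑ c : ZMod p, h c * (starRingEnd ℂ) (h c) = (p : ℂ) * D.card := by
      have expand : ∀ c : ZMod p, h c * (starRingEnd ℂ) (h c)
          = ∑ d ∈ D, ∑ d' ∈ D, ψ (c * (t * (d - d'))) := by
        intro c
        simp only [hh]
        rw [map_sum, Finset.sum_mul_sum]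
        refine Finset.sum_congr rfl fun d _ => Finset.sum_congr rfl fun d' _ => ?_
        rw [conj_psi, ← AddChar.map_add_eq_mul]
        congr 1
        ring
      simp_rw [expand]
      rw [Finset.sum_comm]
      have swap2 : ∀ d : ZMod p, ∑ c : ZMod p, ∑ d' ∈ D, ψ (c * (t * (d - d')))
          = ∑ d' ∈ D, ∑ c : ZMod p, ψ (c * (t * (d - d'))) := fun d => Finset.sum_comm
      simp_rw [swap2, sum_psi, mul_eq_zero, sub_eq_zero]
      simp [ht, Finset.sum_ite_eq, mul_comm]
    have cast_eq : ((∑ c : ZMod p, ‖h c‖ ^ 2 : ℝ) : ℂ) = (((p : ℝ) * D.card : ℝ) : ℂ) := by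
      push_cast
      rw [← key]
      refine Finset.sum_congr rfl fun c _ => ?_
      calc ((‖h c‖ : ℂ))^2 = ((‖h c‖^2 : ℝ) : ℂ) := by push_cast; ring
      _ = h c * (starRingEnd ℂ) (h c) := by
          rw [Complex.mul_conj, Complex.normSq_eq_norm_sq]
    exact_mod_cast cast_eq
  have step1 : ‖∑ c ∈ C, h c‖ ≤ ∑ c ∈ C, ‖h c‖ := norm_sum_le _ _
  have step2 : (∑ c ∈ C, ‖h c‖) ^ 2 ≤ (C.card : ℝ) * ∑ c ∈ C, ‖h c‖ ^ 2 :=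
    sq_sum_le_card_mul_sum_sq
  have step3 : ∑ c ∈ C, ‖h c‖ ^ 2 ≤ ∑ c : ZMod p, ‖h c‖ ^ 2 :=
    Finset.sum_le_univ_sum_of_nonneg fun c => sq_nonneg _
  have step4 : (∑ c ∈ C, ‖h c‖) ^ 2 ≤ (C.card : ℝ) * ((p : ℝ) * D.card) := by
    calc (∑ c ∈ C, ‖h c‖) ^ 2 ≤ (C.card : ℝ) * ∑ c : ZMod p, ‖h c‖ ^ 2 := by
          refine step2.trans (mul_le_mul_of_nonneg_left step3 (by positivity))
    _ = (C.card : ℝ) * ((p : ℝ) * D.card) := by rw [huniv]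
  have step5 : ∑ c ∈ C, ‖h c‖ ≤ Real.sqrt ((C.card : ℝ) * ((p : ℝ) * D.card)) := by
    have h5 := Real.sqrt_le_sqrt step4
    rwa [Real.sqrt_sq (Finset.sum_nonneg fun c _ => norm_nonneg _)] at h5
  exact step1.trans step5

end SumProdAux

namespace SumProdAux

open Finset Complex

variable {p : ℕ} [hpp : Fact p.Prime]

local notation "ψ" => ZMod.stdAddChar (N := p)

lemma count_le (A B C D : Finset (ZMod p)) :
    ((((A ×ˢ B) ×ˢ (C ×ˢ D)).filter fun x => x.1.1 + x.1.2 = x.2.1 * x.2.2).card : ℝ)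
      ≤ (A.card : ℝ) * B.card * C.card * D.card / p
        + Real.sqrt ((p : ℝ) * A.card * B.card * C.card * D.card) := by
  classical
  set P4 := (A ×ˢ B) ×ˢ (C ×ˢ D) with hP4
  set N := (P4.filter fun x => x.1.1 + x.1.2 = x.2.1 * x.2.2).card with hN
  set G : ZMod p → ℂ := fun t => ∑ c ∈ C, ∑ d ∈ D, ψ (-(t * (c * d))) with hG
  have hp0 : (0 : ℝ) < p := by
    exact_mod_cast hpp.out.pos
  -- Key identity
  have hkey : (p : ℂ) * N = ∑ t : ZMod p, fS A t * fS B t * G t := by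
    have hcount : (p : ℂ) * N
        = ∑ x ∈ P4, (if x.1.1 + x.1.2 - x.2.1 * x.2.2 = 0 then (p : ℂ) else 0) := by
      rw [hN, Finset.card_filter]
      push_cast
      rw [Finset.mul_sum]
      refine Finset.sum_congr rfl fun x _ => ?_
      simp_rw [sub_eq_zero]
      split_ifs <;> simp
    rw [hcount]
    simp_rw [← sum_psi]
    rw [Finset.sum_comm]
    refine Finset.sum_congr rfl fun t _ => ?_
    have hchar : ∀ x : (ZMod p × ZMod p) × ZMod p × ZMod p,
        ψ (t * (x.1.1 + x.1.2 - x.2.1 * x.2.2))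
          = ψ (t * x.1.1) * ψ (t * x.1.2) * ψ (-(t * (x.2.1 * x.2.2))) := by
      intro x
      rw [← AddChar.map_add_eq_mul, ← AddChar.map_add_eq_mul]
      congr 1
      ring
    calc ∑ x ∈ P4, ψ (t * (x.1.1 + x.1.2 - x.2.1 * x.2.2))
        = ∑ x ∈ P4, ψ (t * x.1.1) * ψ (t * x.1.2) * ψ (-(t * (x.2.1 * x.2.2))) :=
          Finset.sum_congr rfl fun x _ => hchar x
      _ = fS A t * fS B t * G t := by
          rw [hP4, fS, fS, hG, Finset.sum_mul_sum]
          simp only [Finset.sum_product]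
          simp only [Finset.sum_mul]
          simp only [Finset.mul_sum]
  -- Norm bound
  set E := (Finset.univ : Finset (ZMod p)).erase 0 with hE
  set K := Real.sqrt ((C.card : ℝ) * ((p : ℝ) * D.card)) with hK
  have hsplit : ∑ t : ZMod p, ‖fS A t * fS B t * G t‖
      = ‖fS A 0 * fS B 0 * G 0‖ + ∑ t ∈ E, ‖fS A t * fS B t * G t‖ :=
    (Finset.add_sum_erase _ _ (Finset.mem_univ 0)).symm
  have hF0 : ‖fS A 0 * fS B 0 * G 0‖ = (A.card : ℝ) * B.card * (C.card * D.card) := by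
    have hG0 : G 0 = ((C.card : ℝ) * D.card : ℝ) := by
      simp [hG, AddChar.map_zero_eq_one]
    rw [fS_zero, fS_zero, hG0]
    rw [norm_mul, norm_mul]
    push_cast
    simp [Complex.norm_natCast]
  have hFt : ∀ t ∈ E, ‖fS A t * fS B t * G t‖ ≤ ‖fS A t‖ * ‖fS B t‖ * K := by
    intro t ht
    have ht0 : t ≠ 0 := Finset.ne_of_mem_erase ht
    have hGt : ‖G t‖ ≤ K := by
      have : G t = ∑ c ∈ C, ∑ d ∈ D, ψ ((-t) * (c * d)) := by
        simp [hG, neg_mul]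
      rw [this, hK]
      exact g_bound C D (neg_ne_zero.2 ht0)
    rw [norm_mul, norm_mul]
    have h1 : (0:ℝ) ≤ ‖fS A t‖ * ‖fS B t‖ := by positivity
    exact mul_le_mul_of_nonneg_left hGt h1
  have hCS : ∑ t ∈ E, ‖fS A t‖ * ‖fS B t‖
      ≤ Real.sqrt ((p : ℝ) * A.card * ((p : ℝ) * B.card)) := by
    have h1 : (∑ t ∈ E, ‖fS A t‖ * ‖fS B t‖) ^ 2
        ≤ (∑ t ∈ E, ‖fS A t‖ ^ 2) * ∑ t ∈ E, ‖fS B t‖ ^ 2 :=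
      Finset.sum_mul_sq_le_sq_mul_sq E _ _
    have h2 : ∑ t ∈ E, ‖fS A t‖ ^ 2 ≤ (p : ℝ) * A.card := by
      rw [← parseval A]
      exact Finset.sum_le_sum_of_subset_of_nonneg (Finset.subset_univ E)
        fun t _ _ => sq_nonneg _
    have h3 : ∑ t ∈ E, ‖fS B t‖ ^ 2 ≤ (p : ℝ) * B.card := by
      rw [← parseval B]
      exact Finset.sum_le_sum_of_subset_of_nonneg (Finset.subset_univ E)
        fun t _ _ => sq_nonneg _
    have h4 : (∑ t ∈ E, ‖fS A t‖ * ‖fS B t‖) ^ 2 ≤ (p : ℝ) * A.card * ((p : ℝ) * B.card) := by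
      refine h1.trans ?_
      have hnn : (0:ℝ) ≤ ∑ t ∈ E, ‖fS A t‖ ^ 2 :=
        Finset.sum_nonneg fun t _ => sq_nonneg _
      calc (∑ t ∈ E, ‖fS A t‖ ^ 2) * ∑ t ∈ E, ‖fS B t‖ ^ 2
          ≤ (∑ t ∈ E, ‖fS A t‖ ^ 2) * ((p : ℝ) * B.card) :=
            mul_le_mul_of_nonneg_left h3 hnn
        _ ≤ (p : ℝ) * A.card * ((p : ℝ) * B.card) :=
            mul_le_mul_of_nonneg_right h2 (by positivity)
    have h5 := Real.sqrt_le_sqrt h4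
    rwa [Real.sqrt_sq (Finset.sum_nonneg fun t _ => by positivity)] at h5
  have hsqrtprod : K * Real.sqrt ((p : ℝ) * A.card * ((p : ℝ) * B.card))
      = (p : ℝ) * Real.sqrt ((p : ℝ) * A.card * B.card * C.card * D.card) := by
    rw [hK, ← Real.sqrt_mul (by positivity)]
    have heq : (C.card : ℝ) * ((p : ℝ) * D.card) * ((p : ℝ) * A.card * ((p : ℝ) * B.card))
        = ((p : ℝ))^2 * ((p : ℝ) * A.card * B.card * C.card * D.card) := by ring
    rw [heq, Real.sqrt_mul (by positivity), Real.sqrt_sq hp0.le]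
  have hmain : (p : ℝ) * N ≤ (A.card : ℝ) * B.card * C.card * D.card
      + (p : ℝ) * Real.sqrt ((p : ℝ) * A.card * B.card * C.card * D.card) := by
    have hnorm : (p : ℝ) * N = ‖(p : ℂ) * N‖ := by
      rw [norm_mul, Complex.norm_natCast, Complex.norm_natCast]
    calc (p : ℝ) * N = ‖∑ t : ZMod p, fS A t * fS B t * G t‖ := by rw [hnorm, hkey]
      _ ≤ ∑ t : ZMod p, ‖fS A t * fS B t * G t‖ := norm_sum_le _ _
      _ = ‖fS A 0 * fS B 0 * G 0‖ + ∑ t ∈ E, ‖fS A t * fS B t * G t‖ := hsplit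
      _ ≤ (A.card : ℝ) * B.card * (C.card * D.card)
          + ∑ t ∈ E, ‖fS A t‖ * ‖fS B t‖ * K := by
            rw [hF0]
            exact add_le_add_right (Finset.sum_le_sum hFt) _
      _ = (A.card : ℝ) * B.card * (C.card * D.card)
          + K * ∑ t ∈ E, ‖fS A t‖ * ‖fS B t‖ := by
            rw [← Finset.sum_mul]; ring
      _ ≤ (A.card : ℝ) * B.card * (C.card * D.card)
          + K * Real.sqrt ((p : ℝ) * A.card * ((p : ℝ) * B.card)) := by
            refine add_le_add_right ?_ _
            exact mul_le_mul_of_nonneg_left hCS (Real.sqrt_nonneg _)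
      _ = (A.card : ℝ) * B.card * C.card * D.card
          + (p : ℝ) * Real.sqrt ((p : ℝ) * A.card * B.card * C.card * D.card) := by
            rw [hsqrtprod]; ring
  rw [div_add' _ _ _ hp0.ne', le_div_iff₀ hp0]
  calc (N : ℝ) * p = (p : ℝ) * N := by ring
    _ ≤ _ := hmain
    _ = (A.card : ℝ) * B.card * C.card * D.card
        + Real.sqrt ((p : ℝ) * A.card * B.card * C.card * D.card) * p := by ring

end SumProdAux

namespace SumProdAux

open Finset Complex

variable {p : ℕ} [hpp : Fact p.Prime]

lemma lower_bound (A : Finset (ZMod p)) :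
    A.card * A.card * (A.erase 0).card
      ≤ ((((A + A) ×ˢ A.image (fun x => -x)) ×ˢ
          ((A * A) ×ˢ (A.erase 0).image (fun x => x⁻¹))).filter
          fun x => x.1.1 + x.1.2 = x.2.1 * x.2.2).card := by
  classical
  have hcard : ((A ×ˢ A) ×ˢ A.erase 0).card = A.card * A.card * (A.erase 0).card := by
    rw [Finset.card_product, Finset.card_product]
  rw [← hcard]
  refine Finset.card_le_card_of_injOn
    (fun x => ((x.1.1 + x.1.2, -x.1.2), (x.1.1 * x.2, x.2⁻¹))) ?_ ?_
  · intro x hx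
    rw [Finset.mem_coe, Finset.mem_product, Finset.mem_product] at hx
    obtain ⟨⟨h1, h2⟩, h3⟩ := hx
    have h30 : x.2 ≠ 0 := Finset.ne_of_mem_erase h3
    have h3A : x.2 ∈ A := Finset.mem_of_mem_erase h3
    rw [Finset.mem_coe, Finset.mem_filter, Finset.mem_product, Finset.mem_product, Finset.mem_product]
    refine ⟨⟨⟨Finset.add_mem_add h1 h2, Finset.mem_image_of_mem _ h2⟩,
      Finset.mul_mem_mul h1 h3A, Finset.mem_image_of_mem _ h3⟩, ?_⟩
    simp only
    rw [add_neg_cancel_right, mul_assoc, mul_inv_cancel₀ h30, mul_one]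
  · intro x hx y hy hxy
    simp only [Prod.mk.injEq] at hxy
    obtain ⟨⟨e1, e2⟩, e3, e4⟩ := hxy
    have hx2 : x.2 = y.2 := inv_injective e4
    have hx12 : x.1.2 = y.1.2 := neg_injective e2
    have hx11 : x.1.1 = y.1.1 := by
      have := e1
      rwa [hx12, add_left_inj] at this
    exact Prod.ext (Prod.ext hx11 hx12) hx2

end SumProdAux

namespace SumProdAux

open Finset Complex

lemma aux_M_le_p {P a : ℝ} (hp0 : 0 < P) (ha0 : 0 ≤ a) (hap : a ≤ P) :
    1 / 2 * Real.sqrt (P * a) ≤ P := by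
  have h1 : Real.sqrt (P * a) ≤ Real.sqrt (P * P) := Real.sqrt_le_sqrt (by nlinarith)
  rw [Real.sqrt_mul_self hp0.le] at h1
  linarith

lemma aux_key {P a : ℝ} (hp2 : 2 ≤ P) (hsmall : P ≤ 3000) (ha0 : 0 < a)
    (ha3 : P ^ 2 ≤ a ^ 3) : P + 16 ≤ 16 * a := by
  have ha158 : (3 / 2 : ℝ) ≤ a := by
    have hp24 : (4 : ℝ) ≤ P ^ 2 := by nlinarith
    nlinarith [sq_nonneg a, ha0, ha3]
  by_contra hcontra
  push_neg at hcontra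
  have hbig : (16 * a - 16) ^ 2 < P ^ 2 := by nlinarith
  have hub190 : a ≤ 190 := by nlinarith
  nlinarith [ha3, hbig, hub190, ha158, sq_nonneg (a - 7/4), mul_nonneg
    (mul_nonneg (sub_nonneg.2 ha158) (sub_nonneg.2 hub190)) ha0.le,
    mul_nonneg (sub_nonneg.2 ha158) (sub_nonneg.2 hub190)]

lemma aux_M_le {P a : ℝ} (ha1 : 1 ≤ a) (hp0 : 0 < P) (hkey : P + 16 ≤ 16 * a) :
    1 / 2 * Real.sqrt (P * a) ≤ 2 * a - 1 := by
  have hpa : P * a ≤ (4 * a - 2) ^ 2 := by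
    nlinarith [mul_le_mul_of_nonneg_right (show P ≤ 16 * a - 16 by linarith)
      (show (0:ℝ) ≤ a by linarith)]
  have h1 := Real.sqrt_le_sqrt hpa
  rw [Real.sqrt_sq (by nlinarith)] at h1
  linarith

lemma aux_garaev {P a s : ℝ} (hP : 3000 < P) (ha0 : 0 < a) (hs0 : 0 < s)
    (hs2 : s * s = a) (hap : a ≤ P) (has : P ≤ a * s)
    (hfinal : a * a * (a - 1) ≤ a * a * a / 4 + 1 / 2 * P * a * s) : False := by
  have e4 : P * s ≤ a * a := by nlinarith [mul_le_mul_of_nonneg_right has hs0.le]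
  have step1 : P * s ≤ 4 * a := by
    have h1 : a * (P * s) ≤ a * (a * a) := mul_le_mul_of_nonneg_left e4 ha0.le
    nlinarith [h1]
  have hs4 : s ≤ 4 := by nlinarith [step1, hap]
  have ha16 : a ≤ 16 := by nlinarith [hs2, hs4, hs0.le]
  nlinarith [has, ha16, hs4, hs0.le]

end SumProdAux

set_option maxHeartbeats 1600000 in
open SumProdAux in
theorem sum_product_large_subset (p : ℕ) (hp : p.Prime) (A : Finset (ZMod p))
    (hA : (A.card : ℝ) ≥ (p : ℝ) ^ ((2 : ℝ) / 3)) :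
    (max (A + A).card (A * A).card : ℝ) ≥ (1 / 2) * ((p : ℝ) * A.card) ^ ((1 : ℝ) / 2) := by
  classical
  haveI hpp : Fact p.Prime := ⟨hp⟩
  have hp0 : (0 : ℝ) < p := by exact_mod_cast hp.pos
  have hp2 : (2 : ℝ) ≤ p := by exact_mod_cast hp.two_le
  have hAcard_pos : 0 < A.card := by
    have h : (0 : ℝ) < (A.card : ℝ) := lt_of_lt_of_le (Real.rpow_pos_of_pos hp0 _) hA
    exact_mod_cast h
  have hAne : A.Nonempty := Finset.card_pos.mp hAcard_pos
  set a : ℝ := (A.card : ℝ) with ha_def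
  have ha0 : 0 < a := by rw [ha_def]; exact_mod_cast hAcard_pos
  have ha1 : (1 : ℝ) ≤ a := by rw [ha_def]; exact_mod_cast hAcard_pos
  have hap : a ≤ p := by
    have h := Finset.card_le_univ A
    have h2 : A.card ≤ p := le_trans h (le_of_eq (ZMod.card p))
    rw [ha_def]
    exact_mod_cast h2
  have ha3 : (p : ℝ) ^ 2 ≤ a ^ 3 := by
    have hstep : ((p : ℝ) ^ ((2 : ℝ) / 3)) ^ (3 : ℕ) = (p : ℝ) ^ (2 : ℕ) := by
      rw [← Real.rpow_natCast ((p : ℝ) ^ ((2 : ℝ) / 3)) 3, ← Real.rpow_mul hp0.le,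
        ← Real.rpow_natCast (p : ℝ) 2]
      norm_num
    calc (p : ℝ) ^ 2 = ((p : ℝ) ^ ((2 : ℝ) / 3)) ^ (3 : ℕ) := hstep.symm
      _ ≤ a ^ 3 := by
          have h0 : (0 : ℝ) ≤ (p : ℝ) ^ ((2 : ℝ) / 3) := (Real.rpow_pos_of_pos hp0 _).le
          exact pow_le_pow_left₀ h0 hA 3
  have hrhs : ((p : ℝ) * a) ^ ((1 : ℝ) / 2) = Real.sqrt ((p : ℝ) * a) :=
    (Real.sqrt_eq_rpow _).symm
  rw [hrhs]
  set M := (1 / 2) * Real.sqrt ((p : ℝ) * a) with hM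
  have hM0 : 0 < M := by rw [hM]; positivity
  by_cases hsmall : (p : ℝ) ≤ 3000
  · -- small p : Cauchy-Davenport
    have hCD := ZMod.cauchy_davenport hp hAne hAne
    have hgoal : M ≤ ((A + A).card : ℝ) := by
      rcases le_or_gt p (A.card + A.card - 1) with hc | hc
      · have hple : p ≤ (A + A).card := by rwa [min_eq_left hc] at hCD
        have hple' : (p : ℝ) ≤ ((A + A).card : ℝ) := by exact_mod_cast hple
        refine le_trans ?_ hple'
        rw [hM]
        exact aux_M_le_p hp0 ha0.le hap
      · have hple : A.card + A.card - 1 ≤ (A + A).card := by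
          rwa [min_eq_right hc.le] at hCD
        have hreal : 2 * a - 1 ≤ ((A + A).card : ℝ) := by
          have hcast : ((A.card + A.card - 1 : ℕ) : ℝ) = 2 * a - 1 := by
            push_cast [Nat.cast_sub (by omega : 1 ≤ A.card + A.card)]
            ring
          rw [← hcast]
          exact_mod_cast hple
        have hkey : (p : ℝ) + 16 ≤ 16 * a := aux_key hp2 hsmall ha0 ha3
        have hMle : M ≤ 2 * a - 1 := by
          rw [hM]
          exact aux_M_le ha1 hp0 hkey
        linarith
    exact hgoal.trans (le_max_left _ _)
  · -- large p : Garaev's Fourier argument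
    push_neg at hsmall
    by_contra hcon
    push_neg at hcon
    have hSc : ((A + A).card : ℝ) < M := (le_max_left _ _).trans_lt hcon
    have hPc : ((A * A).card : ℝ) < M := (le_max_right _ _).trans_lt hcon
    set Bneg := A.image (fun x : ZMod p => -x) with hBneg
    set Dinv := (A.erase 0).image (fun x : ZMod p => x⁻¹) with hDinv
    have hBcard : (Bneg.card : ℝ) = a := by
      rw [hBneg, Finset.card_image_of_injective _ neg_injective, ha_def]
    have hDcard : Dinv.card = (A.erase 0).card := by
      rw [hDinv, Finset.card_image_of_injective _ inv_injective]
    set Ec := (A.erase 0).card with hEc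
    have hE_le : (Ec : ℝ) ≤ a := by
      rw [hEc, ha_def]
      exact_mod_cast Finset.card_erase_le (s := A) (a := 0)
    have hE_ge : a - 1 ≤ (Ec : ℝ) := by
      have h := Finset.pred_card_le_card_erase (s := A) (a := 0)
      rw [← hEc] at h
      have h2 : ((A.card - 1 : ℕ) : ℝ) ≤ (Ec : ℝ) := by exact_mod_cast h
      rw [Nat.cast_sub hAcard_pos] at h2
      rw [ha_def]
      simpa using h2
    have hlb := lower_bound (p := p) A
    rw [← hBneg, ← hDinv, ← hEc] at hlb
    have hub := count_le (A + A) Bneg (A * A) Dinv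
    have hchain : a * a * (Ec : ℝ)
        ≤ ((A + A).card : ℝ) * Bneg.card * (A * A).card * Dinv.card / p
          + Real.sqrt ((p : ℝ) * (A + A).card * Bneg.card * (A * A).card * Dinv.card) := by
      refine le_trans ?_ hub
      rw [ha_def]
      exact_mod_cast hlb
    rw [hBcard, hDcard] at hchain
    set s := Real.sqrt a with hs
    have hs0 : 0 < s := Real.sqrt_pos.2 ha0
    have hs2 : s * s = a := Real.mul_self_sqrt ha0.le
    have hsqp : Real.sqrt ((p : ℝ) * a) = Real.sqrt p * s := by
      rw [hs, Real.sqrt_mul hp0.le]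
    have hqp : Real.sqrt p * Real.sqrt p = (p : ℝ) := Real.mul_self_sqrt hp0.le
    have cS : (0:ℝ) ≤ ((A + A).card : ℝ) := Nat.cast_nonneg _
    have cP : (0:ℝ) ≤ ((A * A).card : ℝ) := Nat.cast_nonneg _
    have cE : (0:ℝ) ≤ (Ec : ℝ) := Nat.cast_nonneg _
    have e1 : ((A + A).card : ℝ) * (A * A).card ≤ M * M :=
      mul_le_mul hSc.le hPc.le cP hM0.le
    have e2 : a * (Ec : ℝ) ≤ a * a := mul_le_mul_of_nonneg_left hE_le ha0.le
    have e3 : ((A + A).card : ℝ) * (A * A).card * (a * Ec) ≤ (M * M) * (a * a) :=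
      mul_le_mul e1 e2 (by positivity) (by positivity)
    have hterm1 : ((A + A).card : ℝ) * a * (A * A).card * Ec / p ≤ M * M * a * a / p := by
      have h1 : ((A + A).card : ℝ) * a * (A * A).card * Ec ≤ M * M * a * a := by
        calc ((A + A).card : ℝ) * a * (A * A).card * Ec
            = ((A + A).card : ℝ) * (A * A).card * (a * Ec) := by ring
          _ ≤ (M * M) * (a * a) := e3
          _ = M * M * a * a := by ring
      exact div_le_div_of_nonneg_right h1 hp0.le
    have hterm2 : Real.sqrt ((p : ℝ) * (A + A).card * a * (A * A).card * Ec)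
        ≤ Real.sqrt p * M * a := by
      have h1 : (p : ℝ) * (A + A).card * a * (A * A).card * Ec ≤ (p : ℝ) * (M * a) ^ 2 := by
        calc (p : ℝ) * (A + A).card * a * (A * A).card * Ec
            = (p : ℝ) * (((A + A).card : ℝ) * (A * A).card * (a * Ec)) := by ring
          _ ≤ (p : ℝ) * ((M * M) * (a * a)) := mul_le_mul_of_nonneg_left e3 hp0.le
          _ = (p : ℝ) * (M * a) ^ 2 := by ring
      calc Real.sqrt ((p : ℝ) * (A + A).card * a * (A * A).card * Ec)
          ≤ Real.sqrt ((p : ℝ) * (M * a) ^ 2) := Real.sqrt_le_sqrt h1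
        _ = Real.sqrt p * (M * a) := by
            rw [Real.sqrt_mul hp0.le, Real.sqrt_sq (by positivity)]
        _ = Real.sqrt p * M * a := by ring
    have hMsq : M * M = (p : ℝ) * a / 4 := by
      have hss : Real.sqrt ((p : ℝ) * a) * Real.sqrt ((p : ℝ) * a) = (p : ℝ) * a :=
        Real.mul_self_sqrt (by positivity)
      have hring : (1 / 2 * Real.sqrt ((p : ℝ) * a)) * (1 / 2 * Real.sqrt ((p : ℝ) * a))
          = (Real.sqrt ((p : ℝ) * a) * Real.sqrt ((p : ℝ) * a)) / 4 := by ring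
      rw [hM, hring, hss]
    have hT1 : M * M * a * a / p = a * a * a / 4 := by
      rw [hMsq]
      field_simp
    have hT2 : Real.sqrt p * M * a = (1 / 2) * (p : ℝ) * a * s := by
      rw [hM, hsqp]
      calc Real.sqrt p * ((1 / 2) * (Real.sqrt p * s)) * a
          = (1 / 2) * (Real.sqrt p * Real.sqrt p) * s * a := by ring
        _ = (1 / 2) * (p : ℝ) * a * s := by rw [hqp]; ring
    have hfinal : a * a * (a - 1) ≤ a * a * a / 4 + (1 / 2) * (p : ℝ) * a * s := by
      calc a * a * (a - 1) ≤ a * a * (Ec : ℝ) :=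
            mul_le_mul_of_nonneg_left hE_ge (by positivity)
        _ ≤ _ := hchain
        _ ≤ M * M * a * a / p + Real.sqrt p * M * a := add_le_add hterm1 hterm2
        _ = a * a * a / 4 + (1 / 2) * (p : ℝ) * a * s := by rw [hT1, hT2]
    have has : (p : ℝ) ≤ a * s := by
      have h1 : (p : ℝ) ^ ((1 : ℝ) / 3) ≤ s := by
        rw [hs, ha_def]
        have h := Real.sqrt_le_sqrt hA
        rwa [Real.sqrt_eq_rpow, ← Real.rpow_mul hp0.le,
          show (2 : ℝ) / 3 * (1 / 2) = 1 / 3 by norm_num] at h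
      have h2 : (p : ℝ) ^ ((2 : ℝ) / 3) * (p : ℝ) ^ ((1 : ℝ) / 3) = p := by
        rw [← Real.rpow_add hp0]
        norm_num
      calc (p : ℝ) = (p : ℝ) ^ ((2 : ℝ) / 3) * (p : ℝ) ^ ((1 : ℝ) / 3) := h2.symm
        _ ≤ a * s := mul_le_mul hA h1 (Real.rpow_pos_of_pos hp0 _).le ha0.le
    exact aux_garaev hsmall ha0 hs0 hs2 hap has hfinal
end

section
/- There exists an absolute constant c > 0 such that for every integer m ≥ 2 and every nonempty subset A of the ring Z_m of residue classes modulo m, one has |A+A| · |A·A| ≥ c · min{ m·|A| , (|A|^4 / m) · ( Σ_{d | m, d < m} d^{1/2} )^{-2} }, where the sum is over the positive divisors d of m with d < m. -/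
open Finset ZMod Complex

variable {m : ℕ}

lemma abs_std [NeZero m] (j : ZMod m) : ‖ZMod.stdAddChar j‖ = 1 := by
  rw [ZMod.stdAddChar_apply]; exact Circle.norm_coe _

lemma conj_std [NeZero m] (j : ZMod m) :
    (starRingEnd ℂ) (ZMod.stdAddChar j) = ZMod.stdAddChar (-j) := by
  have h1 : ZMod.stdAddChar j * ZMod.stdAddChar (-j) = 1 := by
    rw [← AddChar.map_add_eq_mul, add_neg_cancel, AddChar.map_zero_eq_one]
  have h2 : (starRingEnd ℂ) (ZMod.stdAddChar j) * ZMod.stdAddChar j = 1 := by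
    rw [mul_comm, Complex.mul_conj, ← Complex.sq_norm, abs_std, one_pow, Complex.ofReal_one]
  calc (starRingEnd ℂ) (ZMod.stdAddChar j)
      = (starRingEnd ℂ) (ZMod.stdAddChar j) * (ZMod.stdAddChar j * ZMod.stdAddChar (-j)) := by rw [h1, mul_one]
    _ = ZMod.stdAddChar (-j) := by rw [← mul_assoc, h2, one_mul]

lemma orth [NeZero m] (t : ZMod m) :
    ∑ i : ZMod m, ZMod.stdAddChar (t * i) = if t = 0 then (m : ℂ) else 0 := by
  split_ifs with h
  · simp only [h, zero_mul, AddChar.map_zero_eq_one, sum_const, card_univ, ZMod.card,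
      nsmul_eq_mul, mul_one]
  · exact AddChar.sum_eq_zero_of_ne_one (ZMod.isPrimitive_stdAddChar m h)


noncomputable def FT [NeZero m] (X : Finset (ZMod m)) (y : ZMod m) : ℂ :=
  ∑ x ∈ X, ZMod.stdAddChar (y * x)

lemma parseval_aux [NeZero m] (X : Finset (ZMod m)) :
    ∑ y : ZMod m, FT X y * (starRingEnd ℂ) (FT X y) = (m : ℂ) * X.card := by
  have key : ∀ y : ZMod m, FT X y * (starRingEnd ℂ) (FT X y)
      = ∑ x ∈ X, ∑ x' ∈ X, ZMod.stdAddChar ((x - x') * y) := by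
    intro y
    rw [FT, map_sum, Finset.sum_mul_sum]
    refine Finset.sum_congr rfl fun x _ => Finset.sum_congr rfl fun x' _ => ?_
    rw [conj_std, ← AddChar.map_add_eq_mul]
    congr 1
    ring
  calc ∑ y : ZMod m, FT X y * (starRingEnd ℂ) (FT X y)
      = ∑ y : ZMod m, ∑ x ∈ X, ∑ x' ∈ X, ZMod.stdAddChar ((x - x') * y) :=
        Finset.sum_congr rfl fun y _ => key y
    _ = ∑ x ∈ X, ∑ x' ∈ X, ∑ y : ZMod m, ZMod.stdAddChar ((x - x') * y) := by
        rw [Finset.sum_comm]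
        exact Finset.sum_congr rfl fun x _ => Finset.sum_comm
    _ = ∑ x ∈ X, ∑ x' ∈ X, (if x - x' = 0 then (m : ℂ) else 0) := by
        simp only [orth]
    _ = (m : ℂ) * X.card := by
        have : ∀ x ∈ X, (∑ x' ∈ X, if x - x' = 0 then (m : ℂ) else 0) = m := by
          intro x hx
          have : ∀ x' : ZMod m, (x - x' = 0) = (x' = x) := by
            intro x'; rw [sub_eq_zero]; exact propext ⟨fun h => h.symm, fun h => h.symm⟩
          simp only [this]
          rw [Finset.sum_ite_eq' X x (fun _ => (m : ℂ))]
          simp [hx]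
        rw [Finset.sum_congr rfl this]
        simp [mul_comm]

lemma parseval [NeZero m] (X : Finset (ZMod m)) :
    ∑ y : ZMod m, (‖FT X y‖)^2 = (m : ℝ) * X.card := by
  have h := parseval_aux X
  have h2 : ∀ y : ZMod m, (((‖FT X y‖)^2 : ℝ) : ℂ) = FT X y * (starRingEnd ℂ) (FT X y) := by
    intro y; rw [Complex.mul_conj, ← Complex.sq_norm]
  have h3 : ((∑ y : ZMod m, (‖FT X y‖)^2 : ℝ) : ℂ) = (((m : ℝ) * X.card : ℝ) : ℂ) := by
    push_cast
    rw [← h]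
    refine Finset.sum_congr rfl fun y _ => ?_
    rw [← h2 y]; push_cast; ring
  exact_mod_cast h3

def kerC [NeZero m] (lam : ZMod m) : ℕ :=
  (univ.filter fun z : ZMod m => lam * z = 0).card

lemma kerC_dvd [NeZero m] (lam : ZMod m) : kerC lam ∣ m := by
  classical
  let K : AddSubgroup (ZMod m) :=
    { carrier := {z | lam * z = 0}
      add_mem' := fun {a} {b} ha hb => by
        simp only [Set.mem_setOf_eq] at *
        rw [mul_add, ha, hb, add_zero]
      zero_mem' := by simp
      neg_mem' := fun {a} ha => by
        simp only [Set.mem_setOf_eq] at *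
        rw [mul_neg, ha, neg_zero] }
  have h1 : Nat.card K ∣ Nat.card (ZMod m) := AddSubgroup.card_addSubgroup_dvd_card K
  have h2 : Nat.card (ZMod m) = m := by rw [Nat.card_eq_fintype_card, ZMod.card]
  have h3 : Nat.card K = kerC lam := by
    rw [Nat.card_eq_fintype_card]
    rw [kerC]
    rw [← Fintype.card_subtype]
    exact Fintype.card_congr (Equiv.subtypeEquivRight fun z => Iff.rfl)
  rwa [h3, h2] at h1

lemma kerC_lt [NeZero m] (hm : 2 ≤ m) {lam : ZMod m} (h : lam ≠ 0) : kerC lam < m := by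
  have h1 : (1 : ZMod m) ∈ univ \ (univ.filter fun z : ZMod m => lam * z = 0) := by
    simp [mul_one, h]
  have hss : (univ.filter fun z : ZMod m => lam * z = 0) ⊂ univ :=
    Finset.filter_ssubset.2 ⟨1, Finset.mem_univ _, by simpa using h⟩
  have := Finset.card_lt_card hss
  rwa [Finset.card_univ, ZMod.card] at this

lemma kerC_pos [NeZero m] (lam : ZMod m) : 0 < kerC lam :=
  Finset.card_pos.2 ⟨0, by simp⟩

lemma fiber_card_le [NeZero m] (lam y : ZMod m) :
    (univ.filter fun t : ZMod m => lam * t = y).card ≤ kerC lam := by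
  rcases (univ.filter fun t : ZMod m => lam * t = y).eq_empty_or_nonempty with h | h
  · simp [h, kerC_pos lam, Nat.le_of_lt (kerC_pos lam)]
  · obtain ⟨t0, ht0⟩ := h
    have ht0' := (Finset.mem_filter.1 ht0).2
    apply Finset.card_le_card_of_injOn (fun t => t - t0)
    · intro t ht
      have h2 := (Finset.mem_filter.1 ht).2
      exact Finset.mem_filter.2 ⟨Finset.mem_univ _, by rw [mul_sub, h2, ht0', sub_self]⟩
    · intro a _ b _ hab
      simpa [sub_left_inj] using hab

lemma fiber_sum [NeZero m] (lam : ZMod m) (F : ZMod m → ℝ) (hF : ∀ y, 0 ≤ F y) :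
    ∑ t : ZMod m, F (lam * t) ≤ (kerC lam : ℝ) * ∑ y : ZMod m, F y := by
  have h := Finset.sum_fiberwise_of_maps_to
    (fun (x : ZMod m) (_ : x ∈ univ) => Finset.mem_univ (lam * x)) (fun t => F (lam * t))
  rw [← h, Finset.mul_sum]
  apply Finset.sum_le_sum
  intro y _
  have hconst : ∑ t ∈ univ.filter (fun t : ZMod m => lam * t = y), F (lam * t)
      = ((univ.filter (fun t : ZMod m => lam * t = y)).card : ℝ) * F y := by
    rw [Finset.sum_congr rfl (fun t ht => by rw [(Finset.mem_filter.1 ht).2])]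
    rw [Finset.sum_const, nsmul_eq_mul]
  rw [hconst]
  exact mul_le_mul_of_nonneg_right (by exact_mod_cast fiber_card_le lam y) (hF y)

noncomputable def DS (m : ℕ) : ℝ := ∑ d ∈ m.divisors.filter (· < m), Real.sqrt d

noncomputable def fTX [NeZero m] (T X : Finset (ZMod m)) (lam : ZMod m) : ℂ :=
  ∑ t ∈ T, ∑ x ∈ X, ZMod.stdAddChar (lam * (t * x))

lemma fourier_claim1 [NeZero m] (T X A S : Finset (ZMod m)) :
    ((((T ×ˢ X ×ˢ A ×ˢ S).filter fun q : ZMod m × ZMod m × ZMod m × ZMod m =>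
        q.1 * q.2.1 + q.2.2.1 - q.2.2.2 = 0).card : ℝ) * m : ℂ)
      = ∑ lam : ZMod m, fTX T X lam * FT A lam * FT S (-lam) := by
  classical
  set Q := T ×ˢ X ×ˢ A ×ˢ S with hQ
  set wq : ZMod m × ZMod m × ZMod m × ZMod m → ZMod m :=
    fun q => q.1 * q.2.1 + q.2.2.1 - q.2.2.2 with hwq
  have expand : ∀ lam : ZMod m,
      ∑ q ∈ Q, ZMod.stdAddChar (lam * wq q) = fTX T X lam * FT A lam * FT S (-lam) := by
    intro lam
    refine Eq.symm ?_
    calc fTX T X lam * FT A lam * FT S (-lam)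
        = (∑ t ∈ T, ∑ x ∈ X, ZMod.stdAddChar (lam * (t * x)))
            * (∑ c ∈ A, ZMod.stdAddChar (lam * c))
            * (∑ s ∈ S, ZMod.stdAddChar (-lam * s)) := rfl
      _ = ∑ t ∈ T, ((∑ x ∈ X, ZMod.stdAddChar (lam * (t * x)))
            * (∑ c ∈ A, ZMod.stdAddChar (lam * c))
            * (∑ s ∈ S, ZMod.stdAddChar (-lam * s))) := by
          rw [Finset.sum_mul, Finset.sum_mul]
      _ = ∑ t ∈ T, ∑ x ∈ X, (ZMod.stdAddChar (lam * (t * x))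
            * (∑ c ∈ A, ZMod.stdAddChar (lam * c))
            * (∑ s ∈ S, ZMod.stdAddChar (-lam * s))) := by
          refine Finset.sum_congr rfl fun t _ => ?_
          rw [Finset.sum_mul, Finset.sum_mul]
      _ = ∑ t ∈ T, ∑ x ∈ X, ∑ c ∈ A, (ZMod.stdAddChar (lam * (t * x))
            * ZMod.stdAddChar (lam * c)
            * (∑ s ∈ S, ZMod.stdAddChar (-lam * s))) := by
          refine Finset.sum_congr rfl fun t _ => Finset.sum_congr rfl fun x _ => ?_
          rw [Finset.mul_sum A (fun c => ZMod.stdAddChar (lam * c))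
            (ZMod.stdAddChar (lam * (t * x))), Finset.sum_mul]
      _ = ∑ t ∈ T, ∑ x ∈ X, ∑ c ∈ A, ∑ s ∈ S, (ZMod.stdAddChar (lam * (t * x))
            * ZMod.stdAddChar (lam * c) * ZMod.stdAddChar (-lam * s)) := by
          refine Finset.sum_congr rfl fun t _ => Finset.sum_congr rfl fun x _ =>
            Finset.sum_congr rfl fun c _ => ?_
          rw [Finset.mul_sum]
      _ = ∑ q ∈ Q, ZMod.stdAddChar (lam * wq q) := by
          rw [hQ]
          simp only [Finset.sum_product]
          refine Finset.sum_congr rfl fun t _ => Finset.sum_congr rfl fun x _ =>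
            Finset.sum_congr rfl fun c _ => Finset.sum_congr rfl fun s _ => ?_
          rw [← AddChar.map_add_eq_mul, ← AddChar.map_add_eq_mul]
          congr 1
          simp only [hwq]
          ring
  have swap : ∑ lam : ZMod m, ∑ q ∈ Q, ZMod.stdAddChar (lam * wq q)
      = ∑ q ∈ Q, ∑ lam : ZMod m, ZMod.stdAddChar (lam * wq q) := Finset.sum_comm
  have inner : ∀ q ∈ Q, ∑ lam : ZMod m, ZMod.stdAddChar (lam * wq q)
      = if wq q = 0 then (m : ℂ) else 0 := by
    intro q _
    have h := orth (m := m) (wq q)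
    rw [← h]
    exact Finset.sum_congr rfl fun lam _ => by rw [mul_comm]
  calc (((Q.filter fun q => wq q = 0).card : ℝ) * m : ℂ)
      = ∑ q ∈ Q, (if wq q = 0 then (m : ℂ) else 0) := by
        rw [← Finset.sum_filter, Finset.sum_const]
        push_cast
        ring
    _ = ∑ q ∈ Q, ∑ lam : ZMod m, ZMod.stdAddChar (lam * wq q) :=
        (Finset.sum_congr rfl inner).symm
    _ = ∑ lam : ZMod m, ∑ q ∈ Q, ZMod.stdAddChar (lam * wq q) := swap.symm
    _ = ∑ lam : ZMod m, fTX T X lam * FT A lam * FT S (-lam) :=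
        Finset.sum_congr rfl fun lam _ => expand lam

lemma abs_fTX_le [NeZero m] (T X : Finset (ZMod m)) {lam : ZMod m} :
    ‖fTX T X lam‖
      ≤ Real.sqrt (kerC lam) * Real.sqrt ((m : ℝ) * T.card * X.card) := by
  classical
  have h1 : ‖fTX T X lam‖ ≤ ∑ t ∈ T, ‖FT X (lam * t)‖ := by
    have : fTX T X lam = ∑ t ∈ T, FT X (lam * t) := by
      refine Finset.sum_congr rfl fun t _ => Finset.sum_congr rfl fun x _ => ?_
      rw [mul_assoc]
    rw [this]
    exact norm_sum_le _ _
  have h2 : (∑ t ∈ T, ‖FT X (lam * t)‖)^2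
      ≤ (T.card : ℝ) * ∑ t ∈ T, (‖FT X (lam * t)‖)^2 :=
    sq_sum_le_card_mul_sum_sq
  have h3 : ∑ t ∈ T, (‖FT X (lam * t)‖)^2
      ≤ ∑ t : ZMod m, (‖FT X (lam * t)‖)^2 :=
    Finset.sum_le_sum_of_subset_of_nonneg (Finset.subset_univ T)
      (fun i _ _ => by positivity)
  have h4 : ∑ t : ZMod m, (‖FT X (lam * t)‖)^2
      ≤ (kerC lam : ℝ) * ∑ y : ZMod m, (‖FT X y‖)^2 :=
    fiber_sum lam (fun y => (‖FT X y‖)^2) (fun y => by positivity)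
  have h5 := parseval (m := m) X
  have key : (∑ t ∈ T, ‖FT X (lam * t)‖)^2
      ≤ (kerC lam : ℝ) * ((m : ℝ) * T.card * X.card) := by
    calc (∑ t ∈ T, ‖FT X (lam * t)‖)^2
        ≤ (T.card : ℝ) * ∑ t ∈ T, (‖FT X (lam * t)‖)^2 := h2
      _ ≤ (T.card : ℝ) * ((kerC lam : ℝ) * ((m : ℝ) * X.card)) := by
          refine mul_le_mul_of_nonneg_left ?_ (by positivity)
          rw [← h5]
          exact le_trans h3 h4
      _ = (kerC lam : ℝ) * ((m : ℝ) * T.card * X.card) := by ring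
  have habs : 0 ≤ ∑ t ∈ T, ‖FT X (lam * t)‖ :=
    Finset.sum_nonneg fun t _ => norm_nonneg _
  calc ‖fTX T X lam‖ ≤ ∑ t ∈ T, ‖FT X (lam * t)‖ := h1
    _ ≤ Real.sqrt ((kerC lam : ℝ) * ((m : ℝ) * T.card * X.card)) := by
        exact (Real.le_sqrt habs (by positivity)).mpr key
    _ ≤ Real.sqrt (kerC lam) * Real.sqrt ((m : ℝ) * T.card * X.card) := by
        rw [Real.sqrt_mul (by positivity)]

lemma cs_pair [NeZero m] (A S : Finset (ZMod m)) (G : Finset (ZMod m)) :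
    ∑ lam ∈ G, ‖FT A lam‖ * ‖FT S (-lam)‖
      ≤ Real.sqrt ((m : ℝ) * A.card) * Real.sqrt ((m : ℝ) * S.card) := by
  classical
  have hnn : 0 ≤ ∑ lam ∈ G, ‖FT A lam‖ * ‖FT S (-lam)‖ :=
    Finset.sum_nonneg fun lam _ => mul_nonneg (norm_nonneg _) (norm_nonneg _)
  have hcs : (∑ lam ∈ G, ‖FT A lam‖ * ‖FT S (-lam)‖)^2
      ≤ (∑ lam ∈ G, (‖FT A lam‖)^2)
        * (∑ lam ∈ G, (‖FT S (-lam)‖)^2) :=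
    Finset.sum_mul_sq_le_sq_mul_sq G _ _
  have hA : ∑ lam ∈ G, (‖FT A lam‖)^2 ≤ (m : ℝ) * A.card := by
    rw [← parseval (m := m) A]
    exact Finset.sum_le_sum_of_subset_of_nonneg (Finset.subset_univ G)
      (fun i _ _ => by positivity)
  have hS : ∑ lam ∈ G, (‖FT S (-lam)‖)^2 ≤ (m : ℝ) * S.card := by
    have hswap : ∑ lam : ZMod m, (‖FT S (-lam)‖)^2
        = ∑ y : ZMod m, (‖FT S y‖)^2 := by
      exact Fintype.sum_equiv (Equiv.neg (ZMod m))
        (fun lam => (‖FT S (-lam)‖)^2)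
        (fun y => (‖FT S y‖)^2) (fun lam => rfl)
    calc ∑ lam ∈ G, (‖FT S (-lam)‖)^2
        ≤ ∑ lam : ZMod m, (‖FT S (-lam)‖)^2 :=
          Finset.sum_le_sum_of_subset_of_nonneg (Finset.subset_univ G)
            (fun i _ _ => by positivity)
      _ = (m : ℝ) * S.card := by rw [hswap]; exact parseval S
  have h2 : (∑ lam ∈ G, ‖FT A lam‖ * ‖FT S (-lam)‖)^2
      ≤ ((m : ℝ) * A.card) * ((m : ℝ) * S.card) := by
    refine le_trans hcs ?_
    have h3 : (0:ℝ) ≤ ∑ lam ∈ G, (‖FT A lam‖)^2 :=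
      Finset.sum_nonneg fun lam _ => by positivity
    exact mul_le_mul hA hS (Finset.sum_nonneg fun lam _ => by positivity)
      (by positivity)
  calc ∑ lam ∈ G, ‖FT A lam‖ * ‖FT S (-lam)‖
      ≤ Real.sqrt (((m : ℝ) * A.card) * ((m : ℝ) * S.card)) :=
        (Real.le_sqrt hnn (by positivity)).mpr h2
    _ = Real.sqrt ((m : ℝ) * A.card) * Real.sqrt ((m : ℝ) * S.card) :=
        Real.sqrt_mul (by positivity) _

lemma fourier_bound [NeZero m] (hm : 2 ≤ m) (T X A S : Finset (ZMod m)) :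
    (((T ×ˢ X ×ˢ A ×ˢ S).filter fun q : ZMod m × ZMod m × ZMod m × ZMod m =>
        q.1 * q.2.1 + q.2.2.1 - q.2.2.2 = 0).card : ℝ) * m
      ≤ (T.card : ℝ) * X.card * A.card * S.card
        + Real.sqrt ((m : ℝ) * T.card * X.card) * Real.sqrt ((m : ℝ) * A.card)
          * Real.sqrt ((m : ℝ) * S.card) * DS m := by
  classical
  have claim1 := fourier_claim1 T X A S
  set N := ((T ×ˢ X ×ˢ A ×ˢ S).filter fun q : ZMod m × ZMod m × ZMod m × ZMod m =>
      q.1 * q.2.1 + q.2.2.1 - q.2.2.2 = 0).card with hN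
  -- main term value
  have main0 : fTX T X 0 * FT A 0 * FT S (-0)
      = (((T.card : ℝ) * X.card * A.card * S.card : ℝ) : ℂ) := by
    rw [neg_zero]
    rw [show fTX T X 0 = ((T.card : ℕ) : ℂ) * ((X.card : ℕ) : ℂ) from by
      rw [fTX]
      simp only [zero_mul, AddChar.map_zero_eq_one, Finset.sum_const, nsmul_eq_mul, mul_one]]
    rw [show FT A 0 = ((A.card : ℕ) : ℂ) from by
      rw [FT]
      simp only [zero_mul, AddChar.map_zero_eq_one, Finset.sum_const, nsmul_eq_mul, mul_one]]
    rw [show FT S 0 = ((S.card : ℕ) : ℂ) from by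
      rw [FT]
      simp only [zero_mul, AddChar.map_zero_eq_one, Finset.sum_const, nsmul_eq_mul, mul_one]]
    push_cast; ring
  -- split off lam = 0
  have hsplit : ∑ lam : ZMod m, fTX T X lam * FT A lam * FT S (-lam)
      = fTX T X 0 * FT A 0 * FT S (-0)
        + ∑ lam ∈ Finset.univ.erase (0 : ZMod m), fTX T X lam * FT A lam * FT S (-lam) :=
    (Finset.add_sum_erase Finset.univ _ (Finset.mem_univ 0)).symm
  have hre : (N : ℝ) * m = (T.card : ℝ) * X.card * A.card * S.card
      + (∑ lam ∈ Finset.univ.erase (0 : ZMod m), fTX T X lam * FT A lam * FT S (-lam)).re := by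
    have h2 := claim1
    rw [hsplit, main0] at h2
    have := congrArg Complex.re h2
    simpa using this
  rw [hre]
  have herr : (∑ lam ∈ Finset.univ.erase (0 : ZMod m),
        fTX T X lam * FT A lam * FT S (-lam)).re
      ≤ Real.sqrt ((m : ℝ) * T.card * X.card) * Real.sqrt ((m : ℝ) * A.card)
          * Real.sqrt ((m : ℝ) * S.card) * DS m := by
    set G := Finset.univ.erase (0 : ZMod m) with hG
    calc (∑ lam ∈ G, fTX T X lam * FT A lam * FT S (-lam)).re
        ≤ ‖∑ lam ∈ G, fTX T X lam * FT A lam * FT S (-lam)‖ :=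
          Complex.re_le_norm _
      _ ≤ ∑ lam ∈ G, ‖fTX T X lam * FT A lam * FT S (-lam)‖ :=
          norm_sum_le _ _
      _ = ∑ lam ∈ G, ‖fTX T X lam‖ * ‖FT A lam‖
            * ‖FT S (-lam)‖ := by
          refine Finset.sum_congr rfl fun lam _ => ?_
          rw [norm_mul, norm_mul]
      _ ≤ ∑ lam ∈ G, (Real.sqrt (kerC lam) * Real.sqrt ((m : ℝ) * T.card * X.card))
            * (‖FT A lam‖ * ‖FT S (-lam)‖) := by
          refine Finset.sum_le_sum fun lam _ => ?_
          rw [mul_assoc]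
          refine mul_le_mul_of_nonneg_right (abs_fTX_le T X) ?_
          positivity
      _ = Real.sqrt ((m : ℝ) * T.card * X.card)
            * ∑ lam ∈ G, Real.sqrt (kerC lam)
              * (‖FT A lam‖ * ‖FT S (-lam)‖) := by
          rw [Finset.mul_sum]
          exact Finset.sum_congr rfl fun lam _ => by ring
      _ ≤ Real.sqrt ((m : ℝ) * T.card * X.card)
            * (DS m * (Real.sqrt ((m : ℝ) * A.card) * Real.sqrt ((m : ℝ) * S.card))) := by
          refine mul_le_mul_of_nonneg_left ?_ (Real.sqrt_nonneg _)
          -- group by kerC value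
          have hmaps : ∀ lam ∈ G, kerC lam ∈ (m.divisors).filter (· < m) := by
            intro lam hlam
            have hlam0 : lam ≠ 0 := Finset.ne_of_mem_erase hlam
            refine Finset.mem_filter.2 ⟨Nat.mem_divisors.2 ⟨kerC_dvd lam, NeZero.ne m⟩, ?_⟩
            exact kerC_lt hm hlam0
          have hgroup := Finset.sum_fiberwise_of_maps_to hmaps
            (fun lam => Real.sqrt (kerC lam)
              * (‖FT A lam‖ * ‖FT S (-lam)‖))
          rw [← hgroup]
          rw [DS, Finset.sum_mul]
          refine Finset.sum_le_sum fun d hd => ?_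
          have hfiber : ∑ lam ∈ G.filter (fun lam => kerC lam = d),
                Real.sqrt (kerC lam) * (‖FT A lam‖ * ‖FT S (-lam)‖)
              = Real.sqrt d * ∑ lam ∈ G.filter (fun lam => kerC lam = d),
                ‖FT A lam‖ * ‖FT S (-lam)‖ := by
            rw [Finset.mul_sum]
            refine Finset.sum_congr rfl fun lam hlam => ?_
            rw [(Finset.mem_filter.1 hlam).2]
          rw [hfiber]
          refine mul_le_mul_of_nonneg_left ?_ (Real.sqrt_nonneg _)
          exact cs_pair A S _
      _ = Real.sqrt ((m : ℝ) * T.card * X.card) * Real.sqrt ((m : ℝ) * A.card)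
            * Real.sqrt ((m : ℝ) * S.card) * DS m := by ring
  linarith [herr]

open Pointwise

lemma inv_injOn [NeZero m] (U : Finset (ZMod m)) (hU : ∀ u ∈ U, IsUnit u) :
    Set.InjOn Ring.inverse (U : Set (ZMod m)) := by
  intro u hu v hv h
  have hu' := hU u hu
  have hv' := hU v hv
  calc u = u * (v * Ring.inverse v) := by rw [Ring.mul_inverse_cancel v hv', mul_one]
    _ = u * Ring.inverse v * v := by ring
    _ = u * Ring.inverse u * v := by rw [h]
    _ = v := by rw [Ring.mul_inverse_cancel u hu', one_mul]

lemma count_lower [NeZero m] (A : Finset (ZMod m)) :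
    A.card * (A.filter IsUnit).card * A.card
      ≤ (((A*A) ×ˢ ((A.filter IsUnit).image Ring.inverse) ×ˢ A ×ˢ (A+A)).filter
          fun q : ZMod m × ZMod m × ZMod m × ZMod m =>
            q.1 * q.2.1 + q.2.2.1 - q.2.2.2 = 0).card := by
  classical
  set U := A.filter IsUnit with hU
  have hsrc : (A ×ˢ U ×ˢ A).card = A.card * U.card * A.card := by
    rw [Finset.card_product, Finset.card_product]
    ring
  rw [← hsrc]
  refine Finset.card_le_card_of_injOn
    (fun p => (p.1 * p.2.1, Ring.inverse p.2.1, p.2.2, p.1 + p.2.2)) ?_ ?_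
  · rintro ⟨a, u, c⟩ hp
    simp only [Finset.mem_coe, Finset.mem_product] at hp
    obtain ⟨ha, hu, hc⟩ := hp
    have huA : u ∈ A := Finset.mem_of_mem_filter u hu
    have huU : IsUnit u := (Finset.mem_filter.1 hu).2
    refine Finset.mem_filter.2 ⟨?_, ?_⟩
    · refine Finset.mem_product.2 ⟨Finset.mul_mem_mul ha huA, ?_⟩
      refine Finset.mem_product.2 ⟨Finset.mem_image_of_mem Ring.inverse hu, ?_⟩
      exact Finset.mem_product.2 ⟨hc, Finset.add_mem_add ha hc⟩
    · show a * u * Ring.inverse u + c - (a + c) = 0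
      rw [mul_assoc, Ring.mul_inverse_cancel u huU, mul_one]
      ring
  · rintro ⟨a1, u1, c1⟩ hp1 ⟨a2, u2, c2⟩ hp2 h
    simp only [Finset.mem_coe, Finset.mem_product] at hp1 hp2
    obtain ⟨-, hu1, -⟩ := hp1
    obtain ⟨-, hu2, -⟩ := hp2
    simp only [Prod.mk.injEq] at h
    obtain ⟨heq1, heq2, heq3, heq4⟩ := h
    have hu : u1 = u2 := by
      have hU' : ∀ u ∈ U, IsUnit u := fun u hu => (Finset.mem_filter.1 hu).2
      exact inv_injOn U hU' hu1 hu2 heq2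
    have hc : c1 = c2 := heq3
    have ha : a1 = a2 := by
      have := heq4
      rw [hc] at this
      exact add_right_cancel this
    simp [ha, hu, hc]

lemma card_multiples [NeZero m] {g : ℕ} (hg : g ∣ m) (hg1 : 0 < g) :
    (Finset.univ.filter fun z : ZMod m => g ∣ z.val).card = m / g := by
  classical
  have hm0 : 0 < m := Nat.pos_of_ne_zero (NeZero.ne m)
  have himg : (Finset.univ.filter fun z : ZMod m => g ∣ z.val)
      = (Finset.range (m / g)).image (fun i => ((g * i : ℕ) : ZMod m)) := by
    ext z
    simp only [Finset.mem_filter, Finset.mem_univ, true_and, Finset.mem_image,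
      Finset.mem_range]
    constructor
    · rintro hdvd
      refine ⟨z.val / g, ?_, ?_⟩
      · exact Nat.div_lt_div_of_lt_of_dvd hg (ZMod.val_lt z)
      · rw [Nat.mul_div_cancel' hdvd]
        exact ZMod.natCast_rightInverse z
    · rintro ⟨i, hi, rfl⟩
      have hlt : g * i < m := by
        calc g * i < g * (m / g) := by
              exact Nat.mul_lt_mul_of_le_of_lt (le_refl g) hi hg1
        _ = m := Nat.mul_div_cancel' hg
      rw [ZMod.val_cast_of_lt hlt]
      exact Dvd.intro i rfl
  rw [himg]
  rw [Finset.card_image_of_injOn, Finset.card_range]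
  intro i hi j hj hij
  simp only [Finset.mem_coe, Finset.mem_range] at hi hj
  have hlt1 : g * i < m := by
    calc g * i < g * (m / g) := Nat.mul_lt_mul_of_le_of_lt (le_refl g) hi hg1
    _ = m := Nat.mul_div_cancel' hg
  have hlt2 : g * j < m := by
    calc g * j < g * (m / g) := Nat.mul_lt_mul_of_le_of_lt (le_refl g) hj hg1
    _ = m := Nat.mul_div_cancel' hg
  have := congrArg ZMod.val hij
  rw [ZMod.val_cast_of_lt hlt1, ZMod.val_cast_of_lt hlt2] at this
  exact Nat.eq_of_mul_eq_mul_left hg1 this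

lemma ker_dvd [NeZero m] {z a : ZMod m} (h : z * a = 0) :
    (m / Nat.gcd a.val m) ∣ z.val := by
  have hm0 : 0 < m := Nat.pos_of_ne_zero (NeZero.ne m)
  have hg : 0 < Nat.gcd a.val m := Nat.gcd_pos_of_pos_right _ hm0
  set g := Nat.gcd a.val m with hgdef
  have hdvd_m : g ∣ m := Nat.gcd_dvd_right _ _
  have hdvd_a : g ∣ a.val := Nat.gcd_dvd_left _ _
  have h1 : m ∣ z.val * a.val := by
    have hv : (z * a).val = z.val * a.val % m := ZMod.val_mul z a
    rw [h] at hv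
    simp only [ZMod.val_zero] at hv
    exact Nat.dvd_of_mod_eq_zero hv.symm
  have h2 : (m / g) ∣ z.val * (a.val / g) := by
    have key : g * (m / g) ∣ g * (z.val * (a.val / g)) := by
      rw [Nat.mul_div_cancel' hdvd_m]
      have : z.val * a.val = g * (z.val * (a.val / g)) := by
        conv_lhs => rw [← Nat.mul_div_cancel' hdvd_a]
        ring
      rw [← this]
      exact h1
    exact (Nat.mul_dvd_mul_iff_left hg).mp key
  have hcop : Nat.Coprime (m / g) (a.val / g) :=
    Nat.Coprime.symm (Nat.coprime_div_gcd_div_gcd hg)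
  exact hcop.dvd_of_dvd_mul_right h2

lemma card_le_gcd_mul_image [NeZero m] (A : Finset (ZMod m)) (a : ZMod m) :
    A.card ≤ Nat.gcd a.val m * (A.image (· * a)).card := by
  classical
  have hm0 : 0 < m := Nat.pos_of_ne_zero (NeZero.ne m)
  have hg : 0 < Nat.gcd a.val m := Nat.gcd_pos_of_pos_right _ hm0
  set g := Nat.gcd a.val m with hgdef
  have hdvd_m : g ∣ m := Nat.gcd_dvd_right _ _
  have hdvd2 : (m / g) ∣ m := Nat.div_dvd_of_dvd hdvd_m
  have hpos2 : 0 < m / g := Nat.div_pos (Nat.le_of_dvd hm0 hdvd_m) hg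
  apply Finset.card_le_mul_card_image
  intro b _
  rcases (A.filter fun z => z * a = b).eq_empty_or_nonempty with h | ⟨t0, ht0⟩
  · rw [h]; simp
  · have ht0' : t0 * a = b := (Finset.mem_filter.1 ht0).2
    have hsub : (A.filter fun z => z * a = b).card
        ≤ (Finset.univ.filter fun z : ZMod m => (m / g) ∣ z.val).card := by
      refine Finset.card_le_card_of_injOn (fun z => z - t0) ?_ ?_
      · intro z hz
        have hz' : z * a = b := (Finset.mem_filter.1 hz).2
        refine Finset.mem_filter.2 ⟨Finset.mem_univ _, ?_⟩
        apply ker_dvd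
        rw [sub_mul, hz', ht0', sub_self]
      · intro x _ y _ hxy
        simpa [sub_left_inj] using hxy
    rw [card_multiples hdvd2 hpos2, Nat.div_div_self hdvd_m (NeZero.ne m)] at hsub
    exact hsub

lemma nonunit_cover [NeZero m] (hm : 2 ≤ m) (B : Finset (ZMod m)) {e : ℕ} (he : 2 ≤ e)
    (hB : ∀ x ∈ B, e ≤ Nat.gcd x.val m) :
    (B.card : ℝ) ≤ Real.sqrt ((m : ℝ) / e) * DS m := by
  classical
  have hm0 : 0 < m := by omega
  set D := m.divisors.filter (fun g => e ≤ g) with hD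
  have hcover : B ⊆ D.biUnion (fun g => Finset.univ.filter fun z : ZMod m => g ∣ z.val) := by
    intro x hx
    refine Finset.mem_biUnion.2 ⟨Nat.gcd x.val m, ?_, ?_⟩
    · exact Finset.mem_filter.2 ⟨Nat.mem_divisors.2 ⟨Nat.gcd_dvd_right _ _, NeZero.ne m⟩,
        hB x hx⟩
    · exact Finset.mem_filter.2 ⟨Finset.mem_univ _, Nat.gcd_dvd_left _ _⟩
  have h1 : B.card ≤ ∑ g ∈ D, m / g := by
    calc B.card ≤ (D.biUnion fun g => Finset.univ.filter fun z : ZMod m => g ∣ z.val).card :=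
          Finset.card_le_card hcover
      _ ≤ ∑ g ∈ D, (Finset.univ.filter fun z : ZMod m => g ∣ z.val).card :=
          Finset.card_biUnion_le
      _ = ∑ g ∈ D, m / g := by
          refine Finset.sum_congr rfl fun g hg => ?_
          have hg' := Finset.mem_filter.1 hg
          have hgdvd : g ∣ m := (Nat.mem_divisors.1 hg'.1).1
          exact card_multiples hgdvd (by omega)
  -- pass to reals
  have h2 : ((∑ g ∈ D, m / g : ℕ) : ℝ) ≤ Real.sqrt ((m : ℝ) / e)
      * ∑ g ∈ D, Real.sqrt ((m / g : ℕ) : ℝ) := by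
    push_cast
    rw [Finset.mul_sum]
    refine Finset.sum_le_sum fun g hg => ?_
    have hg' := Finset.mem_filter.1 hg
    have hgdvd : g ∣ m := (Nat.mem_divisors.1 hg'.1).1
    have hge : e ≤ g := hg'.2
    have hle : ((m / g : ℕ) : ℝ) ≤ (m : ℝ) / e := by
      have hgne : (g : ℝ) ≠ 0 := Nat.cast_ne_zero.mpr (by omega)
      rw [Nat.cast_div hgdvd hgne]
      apply div_le_div_of_nonneg_left (by positivity) (by positivity)
      exact_mod_cast hge
    calc ((m / g : ℕ) : ℝ)
        = Real.sqrt ((m / g : ℕ) : ℝ) * Real.sqrt ((m / g : ℕ) : ℝ) :=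
          (Real.mul_self_sqrt (by positivity)).symm
      _ ≤ Real.sqrt ((m : ℝ) / e) * Real.sqrt ((m / g : ℕ) : ℝ) := by
          refine mul_le_mul_of_nonneg_right ?_ (Real.sqrt_nonneg _)
          exact Real.sqrt_le_sqrt hle
  have h3 : ∑ g ∈ D, Real.sqrt ((m / g : ℕ) : ℝ) ≤ DS m := by
    have himg : ∑ g ∈ D, Real.sqrt ((m / g : ℕ) : ℝ)
        = ∑ d ∈ D.image (fun g => m / g), Real.sqrt d := by
      rw [Finset.sum_image]
      intro x hx y hy hxy
      have hx' := (Nat.mem_divisors.1 (Finset.mem_filter.1 hx).1).1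
      have hy' := (Nat.mem_divisors.1 (Finset.mem_filter.1 hy).1).1
      calc x = m / (m / x) := (Nat.div_div_self hx' (NeZero.ne m)).symm
        _ = m / (m / y) := by rw [show m / x = m / y from hxy]
        _ = y := Nat.div_div_self hy' (NeZero.ne m)
    rw [himg, DS]
    refine Finset.sum_le_sum_of_subset_of_nonneg ?_ (fun d _ _ => Real.sqrt_nonneg _)
    intro d hd
    obtain ⟨g, hg, rfl⟩ := Finset.mem_image.1 hd
    have hg' := Finset.mem_filter.1 hg
    have hgdvd : g ∣ m := (Nat.mem_divisors.1 hg'.1).1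
    refine Finset.mem_filter.2 ⟨Nat.mem_divisors.2 ⟨Nat.div_dvd_of_dvd hgdvd, NeZero.ne m⟩, ?_⟩
    exact Nat.div_lt_self hm0 (by omega)
  calc (B.card : ℝ) ≤ ((∑ g ∈ D, m / g : ℕ) : ℝ) := by exact_mod_cast h1
    _ ≤ Real.sqrt ((m : ℝ) / e) * ∑ g ∈ D, Real.sqrt ((m / g : ℕ) : ℝ) := h2
    _ ≤ Real.sqrt ((m : ℝ) / e) * DS m :=
        mul_le_mul_of_nonneg_left h3 (Real.sqrt_nonneg _)

lemma DS_one_le [NeZero m] (hm : 2 ≤ m) : 1 ≤ DS m := by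
  rw [DS]
  have h1 : (1:ℕ) ∈ m.divisors.filter (· < m) :=
    Finset.mem_filter.2 ⟨Nat.one_mem_divisors.2 (NeZero.ne m), by omega⟩
  have h2 : Real.sqrt ((1:ℕ):ℝ) ≤ ∑ d ∈ m.divisors.filter (· < m), Real.sqrt d :=
    Finset.single_le_sum (fun d _ => Real.sqrt_nonneg _) h1
  simpa using h2

lemma two_le_gcd_of_not_isUnit [NeZero m] (x : ZMod m) (h : ¬ IsUnit x) :
    2 ≤ Nat.gcd x.val m := by
  have h0 : 0 < Nat.gcd x.val m :=
    Nat.gcd_pos_of_pos_right _ (Nat.pos_of_ne_zero (NeZero.ne m))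
  have h1 : Nat.gcd x.val m ≠ 1 := by
    intro hc
    apply h
    have hx : ((x.val : ℕ) : ZMod m) = x := ZMod.natCast_rightInverse x
    rw [← hx]
    exact (ZMod.isUnit_iff_coprime x.val m).mpr hc
  omega

lemma gcd_eq_one_of_isUnit [NeZero m] (x : ZMod m) (h : IsUnit x) :
    Nat.gcd x.val m = 1 := by
  have hx : ((x.val : ℕ) : ZMod m) = x := ZMod.natCast_rightInverse x
  rw [← hx] at h
  exact (ZMod.isUnit_iff_coprime x.val m).mp h

lemma card_le_card_add [NeZero m] (A : Finset (ZMod m)) (h : A.Nonempty) :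
    A.card ≤ (A + A).card := by
  classical
  obtain ⟨a0, ha0⟩ := h
  have hsub : A.image (fun x => x + a0) ⊆ A + A := by
    intro y hy
    obtain ⟨x, hx, rfl⟩ := Finset.mem_image.1 hy
    exact Finset.add_mem_add hx ha0
  calc A.card = (A.image (fun x => x + a0)).card :=
        (Finset.card_image_of_injective A (add_left_injective a0)).symm
    _ ≤ (A + A).card := Finset.card_le_card hsub

lemma card_le_card_mul_of_mem [NeZero m] (A : Finset (ZMod m)) {a : ZMod m} (ha : a ∈ A) :
    A.card ≤ Nat.gcd a.val m * (A * A).card := by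
  classical
  have h1 := card_le_gcd_mul_image A a
  have hsub : A.image (· * a) ⊆ A * A := by
    intro y hy
    obtain ⟨x, hx, rfl⟩ := Finset.mem_image.1 hy
    exact Finset.mul_mem_mul hx ha
  calc A.card ≤ Nat.gcd a.val m * (A.image (· * a)).card := h1
    _ ≤ Nat.gcd a.val m * (A * A).card :=
        Nat.mul_le_mul_left _ (Finset.card_le_card hsub)

lemma case_b2_arith {alv u sa ta dd M : ℝ} (hα1 : 1 ≤ alv) (hu0 : 0 < u)
    (hU2 : alv ≤ 2 * u) (hm0 : 0 < M) (hd0 : 0 < dd) (hsa0 : 0 ≤ sa) (hta0 : 0 ≤ ta)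
    (combined : (alv * u * alv) * M
      ≤ ta * u * alv * sa
        + Real.sqrt (M * ta * u) * Real.sqrt (M * alv) * Real.sqrt (M * sa) * dd) :
    min (M * alv) (alv^4 / (M * dd^2)) ≤ 8 * (sa * ta) := by
  have hal0 : (0:ℝ) < alv := by linarith
  by_cases hcase : (alv * u * alv) * M / 2 ≤ ta * u * alv * sa
  · have hMα : M * alv ≤ 2 * (sa * ta) := by
      have hpos : (0:ℝ) < u * alv := mul_pos hu0 hal0
      have h1 : (M * alv) * (u * alv) ≤ (2 * (sa * ta)) * (u * alv) := by nlinarith [hcase]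
      exact le_of_mul_le_mul_right h1 hpos
    refine le_trans (min_le_left _ _) ?_
    have h2 : (0:ℝ) ≤ sa * ta := mul_nonneg hsa0 hta0
    linarith
  · push_neg at hcase
    have herr : (alv * u * alv) * M / 2
        ≤ Real.sqrt (M * ta * u) * Real.sqrt (M * alv) * Real.sqrt (M * sa) * dd := by
      linarith [combined]
    have hsq : alv^4 * u^2 * M^2 / 4
        ≤ (M * ta * u) * (M * alv) * (M * sa) * dd^2 := by
      have h0 : (0:ℝ) ≤ (alv * u * alv) * M / 2 := by positivity
      calc alv^4 * u^2 * M^2 / 4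
          = ((alv * u * alv) * M / 2)^2 := by ring
        _ ≤ (Real.sqrt (M * ta * u) * Real.sqrt (M * alv) * Real.sqrt (M * sa) * dd)^2 :=
            pow_le_pow_left₀ h0 herr 2
        _ = (Real.sqrt (M * ta * u))^2 * (Real.sqrt (M * alv))^2
              * (Real.sqrt (M * sa))^2 * dd^2 := by ring
        _ = (M * ta * u) * (M * alv) * (M * sa) * dd^2 := by
            rw [Real.sq_sqrt (by positivity), Real.sq_sqrt (by positivity),
              Real.sq_sqrt (by positivity)]
    have hkey : alv^4 * (u * alv * M^2)
        ≤ (8 * (sa * ta) * (M * dd^2)) * (u * alv * M^2) := by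
      calc alv^4 * (u * alv * M^2)
          = (alv^4 * u * M^2) * alv := by ring
        _ ≤ (alv^4 * u * M^2) * (2 * u) :=
            mul_le_mul_of_nonneg_left hU2 (by positivity)
        _ = 2 * (alv^4 * u^2 * M^2) := by ring
        _ ≤ 8 * ((M * ta * u) * (M * alv) * (M * sa) * dd^2) := by linarith [hsq]
        _ = (8 * (sa * ta) * (M * dd^2)) * (u * alv * M^2) := by ring
    have hfin : alv^4 ≤ 8 * (sa * ta) * (M * dd^2) :=
      le_of_mul_le_mul_right hkey (by positivity)
    refine le_trans (min_le_right _ _) ?_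
    rw [div_le_iff₀ (by positivity)]
    linarith [hfin]


set_option maxHeartbeats 2000000 in
theorem sum_product_zmod : ∃ c : ℝ, c > 0 ∧
    ∀ (m : ℕ), 2 ≤ m → ∀ A : Finset (ZMod m), A.Nonempty →
      ((A + A).card * (A * A).card : ℝ) ≥
        c * min ((m : ℝ) * A.card)
          (((A.card : ℝ) ^ 4 / m) *
            (∑ d ∈ m.divisors.filter (· < m), Real.sqrt d) ^ (-2 : ℤ)) := by
  classical
  refine ⟨1/8, by norm_num, ?_⟩
  intro m hm A hA
  haveI : NeZero m := ⟨by omega⟩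
  have hm0 : (0:ℝ) < (m:ℝ) := by exact_mod_cast (by omega : 0 < m)
  have hα0 : 0 < A.card := Finset.card_pos.mpr hA
  have hα1 : (1:ℝ) ≤ (A.card : ℝ) := by exact_mod_cast hα0
  have hd1 : (1:ℝ) ≤ DS m := DS_one_le hm
  have hd0 : (0:ℝ) < DS m := by linarith
  have hzpow : (((A.card : ℝ) ^ 4 / m) *
      (∑ d ∈ m.divisors.filter (· < m), Real.sqrt d) ^ (-2 : ℤ))
      = (A.card : ℝ)^4 / ((m:ℝ) * (DS m)^2) := by
    have hsum : (∑ d ∈ m.divisors.filter (· < m), Real.sqrt d) = DS m := rfl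
    rw [hsum]
    rw [show ((-2 : ℤ)) = -(2:ℤ) from rfl, zpow_neg]
    have h2 : (DS m) ^ (2:ℤ) = (DS m)^2 := by
      rw [zpow_two, sq]
    rw [h2]
    field_simp
  rw [ge_iff_le, hzpow]
  set al := (A.card : ℝ) with hal
  set sa := (((A + A).card : ℕ) : ℝ) with hsa
  set ta := (((A * A).card : ℕ) : ℝ) with hta
  set dd := DS m with hdd
  have hsa0 : (0:ℝ) ≤ sa := by positivity
  have hta0 : (0:ℝ) ≤ ta := by positivity
  suffices h : min ((m:ℝ) * al) (al^4 / ((m:ℝ) * dd^2)) ≤ 8 * (sa * ta) by linarith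
  have hS : al ≤ sa := by
    rw [hal, hsa]; exact_mod_cast card_le_card_add A hA
  by_cases hunit : ∃ u ∈ A, IsUnit u
  · obtain ⟨u0, hu0A, hu0⟩ := hunit
    have hT : al ≤ ta := by
      have h1 := card_le_card_mul_of_mem A hu0A
      rw [gcd_eq_one_of_isUnit u0 hu0, one_mul] at h1
      rw [hal, hta]; exact_mod_cast h1
    by_cases hU2 : al ≤ 2 * ((A.filter IsUnit).card : ℝ)
    · -- case B2 : many units, Fourier argument
      set U := A.filter IsUnit with hUdef
      set u := ((U.card : ℕ) : ℝ) with hu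
      have hu0 : (0:ℝ) < u := by
        have : al ≤ 2 * u := hU2
        linarith
      set X := U.image Ring.inverse with hX
      have hXcard : X.card = U.card :=
        Finset.card_image_of_injOn (inv_injOn U (fun v hv => (Finset.mem_filter.1 hv).2))
      have hlow := count_lower A
      have hfour := fourier_bound hm (A*A) X A (A+A)
      rw [hXcard] at hfour
      have hNge : al * u * al ≤
          (((((A*A) ×ˢ X ×ˢ A ×ˢ (A+A)).filter
            fun q : ZMod m × ZMod m × ZMod m × ZMod m =>
              q.1 * q.2.1 + q.2.2.1 - q.2.2.2 = 0).card : ℕ) : ℝ) := by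
        rw [hal, hu]
        exact_mod_cast hlow
      have combined : (al * u * al) * (m:ℝ)
          ≤ ta * u * al * sa
            + Real.sqrt ((m:ℝ) * ta * u) * Real.sqrt ((m:ℝ) * al)
              * Real.sqrt ((m:ℝ) * sa) * dd := by
        calc (al * u * al) * (m:ℝ)
            ≤ (((((A*A) ×ˢ X ×ˢ A ×ˢ (A+A)).filter
                fun q : ZMod m × ZMod m × ZMod m × ZMod m =>
                  q.1 * q.2.1 + q.2.2.1 - q.2.2.2 = 0).card : ℕ) : ℝ) * (m:ℝ) :=
              mul_le_mul_of_nonneg_right hNge hm0.le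
          _ ≤ ta * u * al * sa
              + Real.sqrt ((m:ℝ) * ta * u) * Real.sqrt ((m:ℝ) * al)
                * Real.sqrt ((m:ℝ) * sa) * dd := hfour
      exact case_b2_arith hα1 hu0 hU2 hm0 hd0 hsa0 hta0 combined
    · -- case B1 : few units
      push_neg at hU2
      set NU := A.filter (fun x => ¬ IsUnit x) with hNU
      have hcards : (A.filter IsUnit).card + NU.card = A.card :=
        Finset.card_filter_add_card_filter_not _
      have hNUge : al ≤ 2 * (NU.card : ℝ) := by
        have h1 : al = ((A.filter IsUnit).card : ℝ) + (NU.card : ℝ) := by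
          rw [hal]; exact_mod_cast hcards.symm
        linarith
      have hcov : ((NU.card : ℕ) : ℝ) ≤ Real.sqrt ((m:ℝ)/2) * dd :=
        nonunit_cover hm NU (le_refl 2)
          (fun x hx => two_le_gcd_of_not_isUnit x (Finset.mem_filter.1 hx).2)
      have hsq : al^2 ≤ 2 * (m:ℝ) * dd^2 := by
        have h1 : al ≤ 2 * (Real.sqrt ((m:ℝ)/2) * dd) := by linarith
        have h3 := pow_le_pow_left₀ (by positivity : (0:ℝ) ≤ al) h1 2
        have h4 : (Real.sqrt ((m:ℝ)/2))^2 = (m:ℝ)/2 := Real.sq_sqrt (by positivity)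
        nlinarith [h3, h4]
      have hst2 : al^2 ≤ sa * ta := by nlinarith [hS, hT, hα1]
      refine le_trans (min_le_right _ _) ?_
      rw [div_le_iff₀ (by positivity)]
      calc al^4 = al^2 * al^2 := by ring
        _ ≤ (sa * ta) * al^2 := mul_le_mul_of_nonneg_right hst2 (by positivity)
        _ ≤ (sa * ta) * (2 * (m:ℝ) * dd^2) :=
            mul_le_mul_of_nonneg_left hsq (mul_nonneg hsa0 hta0)
        _ ≤ 8 * (sa * ta) * ((m:ℝ) * dd^2) := by
            nlinarith [mul_nonneg hsa0 hta0, hm0, hd0, sq_nonneg dd]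
  · -- case A : no units at all
    have hnou : ∀ x ∈ A, ¬ IsUnit x := fun x hx hu => hunit ⟨x, hx, hu⟩
    have hEne : (A.image (fun x => Nat.gcd x.val m)).Nonempty := hA.image _
    set e0 := (A.image (fun x => Nat.gcd x.val m)).min' hEne with he0def
    obtain ⟨a0, ha0A, ha0⟩ :=
      Finset.mem_image.1 ((A.image (fun x => Nat.gcd x.val m)).min'_mem hEne)
    have he0ge : ∀ x ∈ A, e0 ≤ Nat.gcd x.val m := fun x hx =>
      Finset.min'_le _ _ (Finset.mem_image_of_mem _ hx)
    have he02 : 2 ≤ e0 := by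
      rw [he0def, ← ha0]
      exact two_le_gcd_of_not_isUnit a0 (hnou a0 ha0A)
    have he0pos : (0:ℝ) < (e0 : ℝ) := by exact_mod_cast (by omega : 0 < e0)
    have hcov : al ≤ Real.sqrt ((m:ℝ)/(e0:ℝ)) * dd := by
      rw [hal]; exact nonunit_cover hm A he02 he0ge
    have hsq : (e0:ℝ) * al^2 ≤ (m:ℝ) * dd^2 := by
      have h3 := pow_le_pow_left₀ (by positivity : (0:ℝ) ≤ al) hcov 2
      have h4 : (Real.sqrt ((m:ℝ)/(e0:ℝ)))^2 = (m:ℝ)/(e0:ℝ) := Real.sq_sqrt (by positivity)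
      have h5 : al^2 ≤ (m:ℝ)/(e0:ℝ) * dd^2 := by nlinarith [h3, h4]
      calc (e0:ℝ) * al^2 ≤ (e0:ℝ) * ((m:ℝ)/(e0:ℝ) * dd^2) :=
            mul_le_mul_of_nonneg_left h5 he0pos.le
        _ = (m:ℝ) * dd^2 := by field_simp
    have hT : al ≤ (e0:ℝ) * ta := by
      have h1 := card_le_card_mul_of_mem A ha0A
      rw [ha0] at h1
      rw [hal, hta]; exact_mod_cast h1
    have h6 : al^2 ≤ sa * ((e0:ℝ) * ta) := by nlinarith [hS, hT, hα1]
    refine le_trans (min_le_right _ _) ?_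
    rw [div_le_iff₀ (by positivity)]
    calc al^4 = al^2 * al^2 := by ring
      _ ≤ (sa * ((e0:ℝ) * ta)) * al^2 := mul_le_mul_of_nonneg_right h6 (by positivity)
      _ = (sa * ta) * ((e0:ℝ) * al^2) := by ring
      _ ≤ (sa * ta) * ((m:ℝ) * dd^2) :=
          mul_le_mul_of_nonneg_left hsq (mul_nonneg hsa0 hta0)
      _ ≤ 8 * (sa * ta) * ((m:ℝ) * dd^2) := by
          nlinarith [mul_nonneg (mul_nonneg hsa0 hta0) (by positivity : (0:ℝ) ≤ (m:ℝ) * dd^2)]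
end

section
/- Let m ≥ 2 be an integer and let A be a nonempty subset of Z_m. Let d₀ = min_{a ∈ A} gcd(a, m). If |A|^2 > 4 · (m / d₀) · ( Σ_{d | m, d < m} d^{1/2} )^2, then |{ a ∈ A : gcd(a, m) = 1 }| > |A| / 2. -/
theorem many_units_in_A (m : ℕ) (hm : 2 ≤ m) (A : Finset (ZMod m))
    (hA : A.Nonempty)
    (h : (A.card : ℝ) ^ 2 >
        4 * ((m : ℝ) / (A.inf' hA fun a => Nat.gcd (ZMod.val a) m)) *
          (∑ d ∈ m.divisors.filter (· < m), Real.sqrt d) ^ 2) :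
    ((A.filter fun a => Nat.gcd (ZMod.val a) m = 1).card : ℝ) > (A.card : ℝ) / 2 := by
  haveI : NeZero m := ⟨by omega⟩
  have hm0 : 0 < m := by omega
  set d₀ : ℕ := A.inf' hA fun a => Nat.gcd (ZMod.val a) m with hd₀
  set S : ℝ := ∑ d ∈ m.divisors.filter (· < m), Real.sqrt d with hS
  -- basic facts about d₀
  obtain ⟨a₀, ha₀A, ha₀⟩ := Finset.exists_mem_eq_inf' hA fun a => Nat.gcd (ZMod.val a) m
  have hd₀pos : 0 < d₀ := by rw [hd₀, ha₀]; exact Nat.gcd_pos_of_pos_right _ hm0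
  have hd₀dvd : d₀ ∣ m := by rw [hd₀, ha₀]; exact Nat.gcd_dvd_right _ _
  have hcast : ((m / d₀ : ℕ) : ℝ) = (m : ℝ) / (d₀ : ℝ) :=
    Nat.cast_div hd₀dvd (by exact_mod_cast hd₀pos.ne')
  -- the set of non-units in A
  set N : Finset (ZMod m) := A.filter (fun a => Nat.gcd (ZMod.val a) m ≠ 1) with hN
  set D : Finset ℕ := m.divisors.filter (1 < ·) with hD
  -- counting lemma: for each divisor d > 1, the number of elements of A with gcd = d
  have count_le : ∀ d ∈ D, (A.filter (fun a => Nat.gcd (ZMod.val a) m = d)).card ≤ m / d := by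
    intro d hdD
    rw [hD, Finset.mem_filter, Nat.mem_divisors] at hdD
    obtain ⟨⟨hdvd, _⟩, hd1⟩ := hdD
    rw [← Finset.card_range (m / d)]
    apply Finset.card_le_card_of_injOn (fun x => ZMod.val x / d)
    · intro x hx
      rw [Finset.mem_coe, Finset.mem_filter] at hx
      have hxd : d ∣ ZMod.val x := hx.2 ▸ Nat.gcd_dvd_left _ _
      have : ZMod.val x / d < m / d :=
        Nat.div_lt_div_of_lt_of_dvd hdvd (ZMod.val_lt x)
      simpa [Finset.mem_range] using this
    · intro x hx y hy hxy
      rw [Finset.mem_coe, Finset.mem_filter] at hx hy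
      have hxd : d ∣ ZMod.val x := hx.2 ▸ Nat.gcd_dvd_left _ _
      have hyd : d ∣ ZMod.val y := hy.2 ▸ Nat.gcd_dvd_left _ _
      have hxy' : ZMod.val x / d = ZMod.val y / d := hxy
      have : ZMod.val x = ZMod.val y := by
        rw [← Nat.div_mul_cancel hxd, ← Nat.div_mul_cancel hyd, hxy']
      exact ZMod.val_injective m this
  -- N is covered by the fibers over d ∈ D
  have hNsub : N ⊆ D.biUnion (fun d => A.filter (fun a => Nat.gcd (ZMod.val a) m = d)) := by
    intro a haN
    rw [hN, Finset.mem_filter] at haN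
    obtain ⟨haA, hane⟩ := haN
    rw [Finset.mem_biUnion]
    refine ⟨Nat.gcd (ZMod.val a) m, ?_, ?_⟩
    · rw [hD, Finset.mem_filter, Nat.mem_divisors]
      have hpos : 0 < Nat.gcd (ZMod.val a) m := Nat.gcd_pos_of_pos_right _ hm0
      exact ⟨⟨Nat.gcd_dvd_right _ _, hm0.ne'⟩, by omega⟩
    · exact Finset.mem_filter.mpr ⟨haA, rfl⟩
  -- bound each fiber
  have fiber_bound : ∀ d ∈ D,
      ((A.filter (fun a => Nat.gcd (ZMod.val a) m = d)).card : ℝ) ≤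
        Real.sqrt ((m / d₀ : ℕ)) * Real.sqrt ((m / d : ℕ)) := by
    intro d hdD
    rcases (A.filter (fun a => Nat.gcd (ZMod.val a) m = d)).eq_empty_or_nonempty with he | hne
    · rw [he]
      simp
      positivity
    · obtain ⟨a, ha⟩ := hne
      rw [Finset.mem_filter] at ha
      have hd₀led : d₀ ≤ d := ha.2 ▸ Finset.inf'_le _ ha.1
      have h1 : ((A.filter (fun a => Nat.gcd (ZMod.val a) m = d)).card : ℝ) ≤ ((m / d : ℕ) : ℝ) := by
        exact_mod_cast count_le d hdD
      have h2 : ((m / d : ℕ) : ℝ) = Real.sqrt ((m / d : ℕ)) * Real.sqrt ((m / d : ℕ)) :=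
        (Real.mul_self_sqrt (by positivity)).symm
      have h3 : Real.sqrt ((m / d : ℕ)) ≤ Real.sqrt ((m / d₀ : ℕ)) := by
        apply Real.sqrt_le_sqrt
        exact_mod_cast Nat.div_le_div_left hd₀led hd₀pos
      calc ((A.filter (fun a => Nat.gcd (ZMod.val a) m = d)).card : ℝ)
          ≤ Real.sqrt ((m / d : ℕ)) * Real.sqrt ((m / d : ℕ)) := by rw [← h2]; exact h1
        _ ≤ Real.sqrt ((m / d₀ : ℕ)) * Real.sqrt ((m / d : ℕ)) :=
            mul_le_mul_of_nonneg_right h3 (Real.sqrt_nonneg _)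
  -- reindexing the sum
  have hreindex : ∑ d ∈ D, Real.sqrt ((m / d : ℕ)) = S := by
    rw [hS]
    apply Finset.sum_nbij' (fun d => m / d) (fun e => m / e)
    · intro d hd
      rw [hD, Finset.mem_filter, Nat.mem_divisors] at hd
      rw [Finset.mem_filter, Nat.mem_divisors]
      exact ⟨⟨Nat.div_dvd_of_dvd hd.1.1, hm0.ne'⟩, Nat.div_lt_self hm0 hd.2⟩
    · intro e he
      rw [Finset.mem_filter, Nat.mem_divisors] at he
      rw [hD, Finset.mem_filter, Nat.mem_divisors]
      refine ⟨⟨Nat.div_dvd_of_dvd he.1.1, hm0.ne'⟩, ?_⟩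
      obtain ⟨⟨hedvd, _⟩, helt⟩ := he
      have hepos : 0 < e := Nat.pos_of_dvd_of_pos hedvd hm0
      have hmul := Nat.div_mul_cancel hedvd
      by_contra hle
      push_neg at hle
      have : m / e * e ≤ 1 * e := Nat.mul_le_mul_right e hle
      omega
    · intro d hd
      rw [hD, Finset.mem_filter, Nat.mem_divisors] at hd
      exact Nat.div_div_self hd.1.1 hm0.ne'
    · intro e he
      rw [Finset.mem_filter, Nat.mem_divisors] at he
      exact Nat.div_div_self he.1.1 hm0.ne'
    · intro d hd
      rfl
  -- bound on non-units
  have hS0 : 0 ≤ S := Finset.sum_nonneg fun _ _ => Real.sqrt_nonneg _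
  have hNbound : (N.card : ℝ) ≤ Real.sqrt ((m / d₀ : ℕ)) * S := by
    calc (N.card : ℝ) ≤ ((D.biUnion (fun d => A.filter (fun a => Nat.gcd (ZMod.val a) m = d))).card : ℝ) := by
          exact_mod_cast Finset.card_le_card hNsub
      _ ≤ (∑ d ∈ D, (A.filter (fun a => Nat.gcd (ZMod.val a) m = d)).card : ℕ) := by
          exact_mod_cast Finset.card_biUnion_le
      _ = ∑ d ∈ D, ((A.filter (fun a => Nat.gcd (ZMod.val a) m = d)).card : ℝ) := by
          push_cast; rfl
      _ ≤ ∑ d ∈ D, Real.sqrt ((m / d₀ : ℕ)) * Real.sqrt ((m / d : ℕ)) :=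
          Finset.sum_le_sum fiber_bound
      _ = Real.sqrt ((m / d₀ : ℕ)) * ∑ d ∈ D, Real.sqrt ((m / d : ℕ)) := by
          rw [Finset.mul_sum]
      _ = Real.sqrt ((m / d₀ : ℕ)) * S := by rw [hreindex]
  -- from hypothesis: |A| > 2 * sqrt(m/d₀) * S
  have hsq : (2 * (Real.sqrt ((m / d₀ : ℕ)) * S)) ^ 2 = 4 * ((m : ℝ) / (d₀ : ℝ)) * S ^ 2 := by
    rw [mul_pow, mul_pow, Real.sq_sqrt (by positivity), hcast]
    ring
  have hAgt : (A.card : ℝ) > 2 * (Real.sqrt ((m / d₀ : ℕ)) * S) := by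
    have h' : (2 * (Real.sqrt ((m / d₀ : ℕ)) * S)) ^ 2 < (A.card : ℝ) ^ 2 := by
      rw [hsq]; exact_mod_cast h
    have hnn : 0 ≤ 2 * (Real.sqrt ((m / d₀ : ℕ)) * S) := by positivity
    nlinarith [Nat.cast_nonneg (α := ℝ) A.card]
  -- conclude
  have hsplit : (A.filter fun a => Nat.gcd (ZMod.val a) m = 1).card + N.card = A.card := by
    rw [hN]
    exact Finset.card_filter_add_card_filter_not (fun a => Nat.gcd (ZMod.val a) m = 1)
  have hsplit' : ((A.filter fun a => Nat.gcd (ZMod.val a) m = 1).card : ℝ) + (N.card : ℝ) = (A.card : ℝ) := by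
    exact_mod_cast hsplit
  linarith
end

section
/- Let m ≥ 2 be an integer, let d be a positive divisor of m with d < m, and let n be an integer with gcd(n, m/d) = 1. Let A ⊆ Z_m^* and B ⊆ Z_m. Then | Σ_{x ∈ B} Σ_{a ∈ A} e_{m/d}( n · x · a^{-1} ) |^2 ≤ d · m · |A| · |B|, where e_{m/d}(t) = exp(2πi·t/(m/d)) and a^{-1} is the inverse of a in Z_m, with x·a^{-1} read as an integer representative modulo m. -/
open Complex Finset

noncomputable def csz_f (m q : ℕ) (n : ℤ) (t : ZMod m) : ℂ :=
  Complex.exp (2 * Real.pi * Complex.I * ((n : ℂ) * ((ZMod.val t : ℂ)) / (q : ℂ)))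

section aux
variable {m q D : ℕ} {n : ℤ} [NeZero m]

omit [NeZero m] in
lemma csz_f_zero (n : ℤ) (q : ℕ) : csz_f m q n 0 = 1 := by
  simp [csz_f, ZMod.val_zero]

lemma csz_f_add (hmq : m = q * D) (hq : 0 < q) (s t : ZMod m) :
    csz_f m q n (s + t) = csz_f m q n s * csz_f m q n t := by
  rw [csz_f, csz_f, csz_f, ← Complex.exp_add]
  have hval : ZMod.val s + ZMod.val t =
      ZMod.val (s + t) + m * ((ZMod.val s + ZMod.val t) / m) := by
    rw [ZMod.val_add]
    exact (Nat.mod_add_div _ _).symm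
  set k := (ZMod.val s + ZMod.val t) / m with hk
  have hq0 : (q : ℂ) ≠ 0 := Nat.cast_ne_zero.mpr hq.ne'
  have hc : ((ZMod.val s : ℂ)) + (ZMod.val t : ℂ) =
      (ZMod.val (s + t) : ℂ) + (m : ℂ) * (k : ℂ) := by
    exact_mod_cast congrArg (fun j : ℕ => (j : ℂ)) hval
  have hm : (m : ℂ) = (q : ℂ) * (D : ℂ) := by exact_mod_cast hmq
  have hqinv : (q : ℂ) * (q : ℂ)⁻¹ = 1 := mul_inv_cancel₀ hq0
  rw [Complex.exp_eq_exp_iff_exists_int]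
  refine ⟨(-(n * D * k) : ℤ), ?_⟩
  have hj : ((-(n * D * k) : ℤ) : ℂ) = -((n : ℂ) * (D : ℂ) * (k : ℂ)) := by
    push_cast; ring
  rw [hj]
  linear_combination (-2 * Real.pi * Complex.I * (n:ℂ) * ((q:ℂ))⁻¹) * hc +
    (-2 * Real.pi * Complex.I * (n:ℂ) * (k:ℂ) * ((q:ℂ))⁻¹) * hm +
    (-2 * Real.pi * Complex.I * (n:ℂ) * (k:ℂ) * (D:ℂ)) * hqinv

end aux

section aux2
variable {m q D : ℕ} {n : ℤ} [NeZero m]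

lemma csz_f_conj (t : ZMod m) :
    (starRingEnd ℂ) (csz_f m q n t) = (csz_f m q n t)⁻¹ := by
  rw [csz_f, ← Complex.exp_conj, ← Complex.exp_neg]
  congr 1
  have h : (2 * Real.pi * Complex.I * ((n : ℂ) * ((ZMod.val t : ℂ)) / (q : ℂ))) =
      ((2 * Real.pi * (n * (ZMod.val t : ℝ) / q) : ℝ) : ℂ) * Complex.I := by
    push_cast; ring
  rw [h, map_mul, Complex.conj_ofReal, Complex.conj_I]
  ring

lemma csz_f_pow (hmq : m = q * D) (hq : 0 < q) (c : ZMod m) (k : ℕ) :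
    csz_f m q n ((k : ZMod m) * c) = csz_f m q n c ^ k := by
  induction k with
  | zero => simp [csz_f_zero]
  | succ k ih =>
      have h : ((k + 1 : ℕ) : ZMod m) * c = (k : ZMod m) * c + c := by push_cast; ring
      rw [h, csz_f_add hmq hq, ih, pow_succ]

lemma csz_f_sum (hmq : m = q * D) (hq : 0 < q) (c : ZMod m) :
    (∑ x : ZMod m, csz_f m q n (x * c)) =
      if csz_f m q n c = 1 then (m : ℂ) else 0 := by
  have h1 : (∑ x : ZMod m, csz_f m q n (x * c)) =
      ∑ k ∈ Finset.range m, csz_f m q n c ^ k :=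
    Finset.sum_bij' (fun x _ => ZMod.val x) (fun k _ => (k : ZMod m))
      (fun x _ => Finset.mem_range.mpr (ZMod.val_lt x))
      (fun k _ => Finset.mem_univ _)
      (fun x _ => ZMod.natCast_zmod_val x)
      (fun k hk => ZMod.val_natCast_of_lt (Finset.mem_range.mp hk))
      (fun x _ => by rw [← csz_f_pow hmq hq, ZMod.natCast_zmod_val])
  rw [h1]
  by_cases hc : csz_f m q n c = 1
  · simp [hc]
  · rw [if_neg hc, geom_sum_eq hc]
    have h2 : csz_f m q n c ^ m = 1 := by
      rw [← csz_f_pow hmq hq, ZMod.natCast_self, zero_mul, csz_f_zero]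
    rw [h2, sub_self, zero_div]

end aux2

section aux3
variable {m q d : ℕ} {n : ℤ} [NeZero m]

omit [NeZero m] in
lemma csz_f_ne_zero (t : ZMod m) : csz_f m q n t ≠ 0 := Complex.exp_ne_zero _

omit [NeZero m] in
lemma csz_f_eq_one_iff (hq : 0 < q) (hn : Int.gcd n q = 1) (c : ZMod m) :
    csz_f m q n c = 1 ↔ q ∣ ZMod.val c := by
  have hq0 : (q : ℂ) ≠ 0 := Nat.cast_ne_zero.mpr hq.ne'
  have hqinv : (q : ℂ) * (q : ℂ)⁻¹ = 1 := mul_inv_cancel₀ hq0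
  have h2 : (2 * (Real.pi : ℂ) * Complex.I) ≠ 0 := by
    simp [Real.pi_ne_zero, Complex.I_ne_zero]
  rw [csz_f, Complex.exp_eq_one_iff]
  constructor
  · rintro ⟨j, hj⟩
    have hj' : (2 * (Real.pi : ℂ) * Complex.I) * ((n : ℂ) * ((ZMod.val c : ℂ)) / (q : ℂ)) =
        (2 * (Real.pi : ℂ) * Complex.I) * (j : ℂ) := by linear_combination hj
    have hx : ((n : ℂ) * ((ZMod.val c : ℂ)) / (q : ℂ)) = (j : ℂ) := mul_left_cancel₀ h2 hj'
    have hx2 : (n : ℂ) * ((ZMod.val c : ℂ)) = (j : ℂ) * (q : ℂ) := by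
      rw [div_eq_iff hq0] at hx; exact hx
    have hx3 : n * (ZMod.val c : ℤ) = j * q := by exact_mod_cast hx2
    have hdvd : (q : ℤ) ∣ n * (ZMod.val c : ℤ) := ⟨j, by linarith⟩
    have hco : IsCoprime (q : ℤ) n := by
      rw [Int.isCoprime_iff_gcd_eq_one, Int.gcd_comm]; exact hn
    have := hco.dvd_of_dvd_mul_left hdvd
    exact_mod_cast this
  · rintro ⟨w, hw⟩
    refine ⟨n * w, ?_⟩
    have hc : ((ZMod.val c : ℂ)) = (q : ℂ) * (w : ℂ) := by exact_mod_cast hw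
    have hj : ((n * w : ℤ) : ℂ) = (n : ℂ) * (w : ℂ) := by push_cast; ring
    rw [hj]
    linear_combination (2 * (Real.pi:ℂ) * Complex.I * (n:ℂ) * (w:ℂ)) * hqinv +
      (2 * (Real.pi:ℂ) * Complex.I * (n:ℂ) * ((q:ℂ))⁻¹) * hc

lemma csz_fiber_le (hmq : m = q * d) (hq : 0 < q) (hd : 0 < d) (v : ZMod q) :
    (Finset.univ.filter fun t : ZMod m => ((ZMod.val t : ℕ) : ZMod q) = v).card ≤ d := by
  haveI : NeZero d := ⟨hd.ne'⟩
  classical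
  have hinj : Set.InjOn (fun t : ZMod m => ((ZMod.val t / q : ℕ) : ZMod d))
      ((Finset.univ.filter fun t : ZMod m => ((ZMod.val t : ℕ) : ZMod q) = v) : Finset (ZMod m)) := by
    intro t ht t' ht' heq
    simp only [Finset.coe_filter, Set.mem_setOf_eq] at ht ht'
    have hlt : ZMod.val t / q < d := by
      apply Nat.div_lt_of_lt_mul; rw [← hmq]; exact ZMod.val_lt t
    have hlt' : ZMod.val t' / q < d := by
      apply Nat.div_lt_of_lt_mul; rw [← hmq]; exact ZMod.val_lt t'
    have hdiv : ZMod.val t / q = ZMod.val t' / q := by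
      have h := congrArg ZMod.val heq
      rwa [ZMod.val_cast_of_lt hlt, ZMod.val_cast_of_lt hlt'] at h
    have hmod : ZMod.val t % q = ZMod.val t' % q := by
      have h1 := congrArg ZMod.val (ht.2.trans ht'.2.symm)
      rwa [ZMod.val_natCast, ZMod.val_natCast] at h1
    have hval : ZMod.val t = ZMod.val t' := by
      rw [← Nat.div_add_mod (ZMod.val t) q, ← Nat.div_add_mod (ZMod.val t') q, hdiv, hmod]
    calc t = ((ZMod.val t : ℕ) : ZMod m) := (ZMod.natCast_zmod_val t).symm
      _ = ((ZMod.val t' : ℕ) : ZMod m) := by rw [hval]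
      _ = t' := ZMod.natCast_zmod_val t'
  have h := Finset.card_le_card_of_injOn (fun t : ZMod m => ((ZMod.val t / q : ℕ) : ZMod d))
    (fun t _ => Finset.mem_univ _) hinj
  simpa [Finset.card_univ, ZMod.card] using h

end aux3

theorem character_sum_zmod (m : ℕ) (hm : 2 ≤ m) (d : ℕ) (hd : d ∣ m) (hdm : d < m)
    (hdpos : 0 < d) (n : ℤ) (hn : Int.gcd n (m / d) = 1)
    (A B : Finset (ZMod m)) (hU : ∀ a ∈ A, IsUnit a) :
    ‖∑ x ∈ B, ∑ a ∈ A,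
        Complex.exp (2 * Real.pi * Complex.I *
          ((n : ℂ) * ((ZMod.val (x * a⁻¹) : ℂ)) / ((m / d : ℕ) : ℂ)))‖ ^ 2 ≤
      (d : ℝ) * m * A.card * B.card := by
  haveI : NeZero m := ⟨by omega⟩
  classical
  set q := m / d with hqdef
  obtain ⟨k, hk⟩ := hd
  have hqk : q = k := by rw [hqdef, hk, Nat.mul_div_cancel_left _ hdpos]
  have hk2 : 2 ≤ k := by
    by_contra h
    push_neg at h
    interval_cases k <;> simp at hk <;> omega
  have hq : 0 < q := by omega
  have hmq : m = q * d := by rw [hqk, hk]; ring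
  have hn' : Int.gcd n q = 1 := hn
  set g : ZMod m → ℂ := fun x => ∑ a ∈ A, csz_f m q n (x * a⁻¹) with hg
  have step1 : ‖∑ x ∈ B, g x‖ ^ 2 ≤ (B.card : ℝ) * ∑ x ∈ B, ‖g x‖ ^ 2 := by
    have t1 : ‖∑ x ∈ B, g x‖ ≤ ∑ x ∈ B, ‖g x‖ := norm_sum_le _ _
    have t2 : (∑ x ∈ B, ‖g x‖) ^ 2 ≤ (∑ x ∈ B, (1 : ℝ) ^ 2) * ∑ x ∈ B, ‖g x‖ ^ 2 := by
      have h := Finset.sum_mul_sq_le_sq_mul_sq B (fun _ => (1 : ℝ)) (fun x => ‖g x‖)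
      simpa using h
    have t3 : (∑ x ∈ B, (1 : ℝ) ^ 2) = B.card := by simp
    calc ‖∑ x ∈ B, g x‖ ^ 2 ≤ (∑ x ∈ B, ‖g x‖) ^ 2 :=
          pow_le_pow_left₀ (norm_nonneg _) t1 2
      _ ≤ (∑ x ∈ B, (1 : ℝ) ^ 2) * ∑ x ∈ B, ‖g x‖ ^ 2 := t2
      _ = (B.card : ℝ) * ∑ x ∈ B, ‖g x‖ ^ 2 := by rw [t3]
  have step2 : ∑ x ∈ B, ‖g x‖ ^ 2 ≤ ∑ x : ZMod m, ‖g x‖ ^ 2 :=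
    Finset.sum_le_sum_of_subset_of_nonneg (Finset.subset_univ B)
      (fun _ _ _ => sq_nonneg _)
  have expand : ∑ x : ZMod m, g x * (starRingEnd ℂ) (g x)
      = ∑ a ∈ A, ∑ a' ∈ A,
          (if csz_f m q n (a⁻¹ - a'⁻¹) = 1 then (m : ℂ) else 0) := by
    have e1 : ∀ x : ZMod m, g x * (starRingEnd ℂ) (g x)
        = ∑ a ∈ A, ∑ a' ∈ A, csz_f m q n (x * (a⁻¹ - a'⁻¹)) := by
      intro x
      have hconj : (starRingEnd ℂ) (g x) = ∑ a' ∈ A, (csz_f m q n (x * a'⁻¹))⁻¹ := by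
        rw [hg]
        simp only [map_sum]
        exact Finset.sum_congr rfl fun a' _ => csz_f_conj _
      rw [hconj, hg]
      simp only []
      rw [Finset.sum_mul_sum]
      refine Finset.sum_congr rfl fun a _ => Finset.sum_congr rfl fun a' _ => ?_
      have hsplit : x * (a⁻¹ - a'⁻¹) + x * a'⁻¹ = x * a⁻¹ := by ring
      rw [← hsplit, csz_f_add hmq hq, mul_inv_cancel_right₀ (csz_f_ne_zero _)]
    calc ∑ x : ZMod m, g x * (starRingEnd ℂ) (g x)
        = ∑ x : ZMod m, ∑ a ∈ A, ∑ a' ∈ A, csz_f m q n (x * (a⁻¹ - a'⁻¹)) :=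
          Finset.sum_congr rfl fun x _ => e1 x
      _ = ∑ a ∈ A, ∑ x : ZMod m, ∑ a' ∈ A, csz_f m q n (x * (a⁻¹ - a'⁻¹)) :=
          Finset.sum_comm
      _ = ∑ a ∈ A, ∑ a' ∈ A, ∑ x : ZMod m, csz_f m q n (x * (a⁻¹ - a'⁻¹)) :=
          Finset.sum_congr rfl fun a _ => Finset.sum_comm
      _ = _ := Finset.sum_congr rfl fun a _ => Finset.sum_congr rfl fun a' _ =>
          csz_f_sum hmq hq _
  have real_eq : (∑ x : ZMod m, ‖g x‖ ^ 2)
      = ∑ a ∈ A, ∑ a' ∈ A,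
          (if csz_f m q n (a⁻¹ - a'⁻¹) = 1 then (m : ℝ) else 0) := by
    apply Complex.ofReal_injective
    calc ((∑ x : ZMod m, ‖g x‖ ^ 2 : ℝ) : ℂ)
        = ∑ x : ZMod m, g x * (starRingEnd ℂ) (g x) := by
          rw [Complex.ofReal_sum]
          refine Finset.sum_congr rfl fun x _ => ?_
          rw [Complex.mul_conj, Complex.normSq_eq_norm_sq]
      _ = ∑ a ∈ A, ∑ a' ∈ A,
          (if csz_f m q n (a⁻¹ - a'⁻¹) = 1 then (m : ℂ) else 0) := expand
      _ = _ := by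
          rw [Complex.ofReal_sum]
          refine (Finset.sum_congr rfl fun a _ => ?_).symm
          rw [Complex.ofReal_sum]
          refine Finset.sum_congr rfl fun a' _ => ?_
          split <;> simp
  have count : ∀ a ∈ A,
      (∑ a' ∈ A, (if csz_f m q n (a⁻¹ - a'⁻¹) = 1 then (m : ℝ) else 0))
        ≤ (m : ℝ) * d := by
    intro a ha
    have hqm : q ∣ m := ⟨d, hmq⟩
    have hhom : ∀ t : ZMod m, ((ZMod.val t : ℕ) : ZMod q) = ZMod.castHom hqm (ZMod q) t :=
      fun t => by rw [ZMod.natCast_val, ZMod.castHom_apply]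
    have hcard : (A.filter fun a' => csz_f m q n (a⁻¹ - a'⁻¹) = 1).card ≤ d := by
      refine le_trans (Finset.card_le_card_of_injOn (fun a' : ZMod m => a'⁻¹)
        ?_ ?_) (csz_fiber_le hmq hq hdpos ((ZMod.val (a⁻¹ : ZMod m) : ℕ) : ZMod q))
      · intro a' ha'
        rw [Finset.mem_coe, Finset.mem_filter] at ha'
        refine Finset.mem_coe.mpr (Finset.mem_filter.mpr ⟨Finset.mem_univ _, ?_⟩)
        have hdvd : q ∣ ZMod.val (a⁻¹ - a'⁻¹) := (csz_f_eq_one_iff hq hn' _).mp ha'.2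
        have h0 : ((ZMod.val (a⁻¹ - a'⁻¹) : ℕ) : ZMod q) = 0 :=
          (ZMod.natCast_eq_zero_iff _ _).mpr hdvd
        rw [hhom, map_sub, sub_eq_zero] at h0
        rw [hhom, hhom]
        exact h0.symm
      · intro a1 h1 a2 h2 heq
        simp only [Finset.coe_filter, Set.mem_setOf_eq] at h1 h2
        have hu1 := hU a1 h1.1
        have hu2 := hU a2 h2.1
        simp only at heq
        calc a1 = a1 * (a2⁻¹ * a2) := by rw [ZMod.inv_mul_of_unit a2 hu2, mul_one]
          _ = a1 * a1⁻¹ * a2 := by rw [← heq, mul_assoc]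
          _ = a2 := by rw [ZMod.mul_inv_of_unit a1 hu1, one_mul]
    rw [Finset.sum_ite, Finset.sum_const, Finset.sum_const_zero, add_zero, nsmul_eq_mul]
    calc ((A.filter fun a' => csz_f m q n (a⁻¹ - a'⁻¹) = 1).card : ℝ) * m
        ≤ (d : ℝ) * m := by
          apply mul_le_mul_of_nonneg_right _ (by positivity)
          exact_mod_cast hcard
      _ = (m : ℝ) * d := by ring
  have sum_le : ∑ x : ZMod m, ‖g x‖ ^ 2 ≤ (m : ℝ) * d * A.card := by
    rw [real_eq]
    calc ∑ a ∈ A, ∑ a' ∈ A, (if csz_f m q n (a⁻¹ - a'⁻¹) = 1 then (m : ℝ) else 0)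
        ≤ ∑ _a ∈ A, (m : ℝ) * d := Finset.sum_le_sum count
      _ = A.card * ((m : ℝ) * d) := by rw [Finset.sum_const, nsmul_eq_mul]
      _ = (m : ℝ) * d * A.card := by ring
  calc ‖∑ x ∈ B, g x‖ ^ 2 ≤ (B.card : ℝ) * ∑ x ∈ B, ‖g x‖ ^ 2 := step1
    _ ≤ (B.card : ℝ) * ∑ x : ZMod m, ‖g x‖ ^ 2 :=
        mul_le_mul_of_nonneg_left step2 (Nat.cast_nonneg _)
    _ ≤ (B.card : ℝ) * ((m : ℝ) * d * A.card) :=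
        mul_le_mul_of_nonneg_left sum_le (Nat.cast_nonneg _)
    _ = (d : ℝ) * m * A.card * B.card := by ring
end

section
/- Let m ≥ 2 be an integer and let A be a nonempty subset of the group of units Z_m^*. Then |A+A| · |A·A| ≥ (1/4) · min{ m·|A| , (|A|^4 / m) · ( Σ_{d | m, d < m} d^{1/2} )^{-2} }. -/
open Finset

namespace SPaux

variable {m : ℕ} [NeZero m]

noncomputable def ψ : ZMod m → ℂ := ZMod.stdAddChar

lemma ψ_zero : ψ (0 : ZMod m) = 1 := AddChar.map_zero_eq_one _

lemma ψ_add (x y : ZMod m) : ψ (x + y) = ψ x * ψ y := AddChar.map_add_eq_mul _ x y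

lemma norm_ψ (x : ZMod m) : ‖ψ x‖ = 1 := by
  rw [ψ, ZMod.stdAddChar_apply, Circle.norm_coe]

lemma ψ_neg (x : ZMod m) : ψ (-x) = starRingEnd ℂ (ψ x) := by
  have h1 : ψ x * ψ (-x) = 1 := by rw [← ψ_add, add_neg_cancel, ψ_zero]
  have h2 : ψ (-x) = (ψ x)⁻¹ := eq_inv_of_mul_eq_one_right h1
  rw [h2, Complex.inv_eq_conj (norm_ψ x)]

lemma sum_ψ (z : ZMod m) :
    ∑ t : ZMod m, ψ (t * z) = if z = 0 then (m : ℂ) else 0 := by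
  split_ifs with h
  · simp [h, ψ_zero, card_univ]
  · simp_rw [mul_comm, ψ]
    exact AddChar.sum_eq_zero_of_ne_one (ZMod.isPrimitive_stdAddChar m h)


/-- `V B x = ∑_{b∈B} ψ(x b)`. -/
noncomputable def V (B : Finset (ZMod m)) (x : ZMod m) : ℂ := ∑ b ∈ B, ψ (x * b)

lemma parseval (B : Finset (ZMod m)) :
    ∑ x : ZMod m, ‖V B x‖ ^ 2 = (m : ℝ) * B.card := by
  have key : ((∑ x : ZMod m, ‖V B x‖ ^ 2 : ℝ) : ℂ) = (m : ℂ) * B.card := by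
    push_cast
    have h1 : ∀ x : ZMod m, ((‖V B x‖ : ℂ) ^ 2) = V B x * starRingEnd ℂ (V B x) := by
      intro x
      rw [Complex.mul_conj']
    calc ∑ x : ZMod m, ((‖V B x‖ : ℂ) ^ 2)
        = ∑ x : ZMod m, ∑ b ∈ B, ∑ b' ∈ B, ψ (x * (b - b')) := by
          refine Finset.sum_congr rfl fun x _ => ?_
          rw [h1, V, map_sum, Finset.sum_mul_sum]
          refine Finset.sum_congr rfl fun b _ => Finset.sum_congr rfl fun b' _ => ?_
          rw [← ψ_neg, ← ψ_add, mul_sub, sub_eq_add_neg]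
      _ = ∑ b ∈ B, ∑ b' ∈ B, ∑ x : ZMod m, ψ (x * (b - b')) := by
          rw [Finset.sum_comm]
          exact Finset.sum_congr rfl fun b _ => Finset.sum_comm
      _ = ∑ b ∈ B, ∑ b' ∈ B, if b = b' then (m : ℂ) else 0 := by
          refine Finset.sum_congr rfl fun b _ => Finset.sum_congr rfl fun b' _ => ?_
          rw [sum_ψ]
          simp [sub_eq_zero]
      _ = (m : ℂ) * B.card := by
          rw [Finset.sum_congr rfl fun b hb => ?_]
          · rw [Finset.sum_const, nsmul_eq_mul, mul_comm]
          · rw [Finset.sum_ite_eq, if_pos hb]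
  exact_mod_cast key

/-- number of solutions of `t * x = 0`. -/
def Dz (t : ZMod m) : ℕ := (univ.filter fun x : ZMod m => t * x = 0).card

lemma Dz_neg (t : ZMod m) : Dz (-t) = Dz t := by
  unfold Dz
  congr 1
  ext x
  simp [neg_mul, neg_eq_zero]

lemma Dz_mem (t : ZMod m) (ht : t ≠ 0) : Dz t ∈ m.divisors.filter (· < m) := by
  classical
  have hm0 : (m : ℕ) ≠ 0 := NeZero.ne m
  -- the kernel as an additive subgroup
  let H : AddSubgroup (ZMod m) :=
    { carrier := {x | t * x = 0}
      zero_mem' := by simp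
      add_mem' := by
        intro a b ha hb
        simp only [Set.mem_setOf_eq] at *
        rw [mul_add, ha, hb, add_zero]
      neg_mem' := by
        intro a ha
        simp only [Set.mem_setOf_eq] at *
        rw [mul_neg, ha, neg_zero] }
  have hcard : Nat.card H = Dz t := by
    have e : ↥H ≃ {x : ZMod m // t * x = 0} := Equiv.subtypeEquivRight (fun x => Iff.rfl)
    rw [Nat.card_congr e, Nat.card_eq_fintype_card, Dz]
    exact Fintype.card_subtype _
  have hdvd : Dz t ∣ m := by
    have := AddSubgroup.card_addSubgroup_dvd_card H
    rwa [hcard, Nat.card_zmod] at this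
  have hne : Dz t ≠ m := by
    intro h
    have huniv : (univ.filter fun x : ZMod m => t * x = 0) = univ := by
      apply Finset.eq_univ_of_card
      rw [Dz] at h
      rw [h, ZMod.card]
    have h1 : (1 : ZMod m) ∈ univ.filter fun x : ZMod m => t * x = 0 := by
      rw [huniv]; exact mem_univ _
    simp only [mem_filter, mul_one] at h1
    exact ht h1.2
  have hlt : Dz t < m := lt_of_le_of_ne (Nat.le_of_dvd (Nat.pos_of_ne_zero hm0) hdvd) hne
  simp [Nat.mem_divisors, hdvd, hm0, hlt]

lemma mult_bound (t : ZMod m) (A : Finset (ZMod m)) (f : ZMod m → ℝ)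
    (hf : ∀ y, 0 ≤ f y) :
    ∑ a ∈ A, f (t * a) ≤ (Dz t : ℝ) * ∑ y : ZMod m, f y := by
  classical
  have fib : ∀ y : ZMod m, ((A.filter fun a => t * a = y).card : ℝ) ≤ Dz t := by
    intro y
    by_cases hne : (A.filter fun a => t * a = y).Nonempty
    · obtain ⟨a₀, ha₀⟩ := hne
      simp only [mem_filter] at ha₀
      have : (A.filter fun a => t * a = y).card ≤ Dz t := by
        apply Finset.card_le_card_of_injOn (fun a => a - a₀)
        · intro a ha
          simp only [Finset.mem_coe, mem_filter, mem_univ, true_and] at ha ⊢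
          rw [mul_sub, ha.2, ha₀.2, sub_self]
        · intro x _ y' _ h
          exact sub_left_injective h
      exact_mod_cast this
    · rw [Finset.not_nonempty_iff_eq_empty] at hne
      simp [hne]
  calc ∑ a ∈ A, f (t * a)
      = ∑ y ∈ A.image (fun a => t * a), ∑ a ∈ A.filter fun a => t * a = y, f (t * a) := by
        exact (Finset.sum_fiberwise_of_maps_to (fun a ha => Finset.mem_image_of_mem _ ha) _).symm
    _ = ∑ y ∈ A.image (fun a => t * a), ((A.filter fun a => t * a = y).card : ℝ) * f y := by
        refine Finset.sum_congr rfl fun y _ => ?_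
        rw [Finset.sum_congr rfl fun a ha => ?_, Finset.sum_const, nsmul_eq_mul]
        rw [(Finset.mem_filter.mp ha).2]
    _ ≤ ∑ y ∈ A.image (fun a => t * a), (Dz t : ℝ) * f y := by
        refine Finset.sum_le_sum fun y _ => ?_
        exact mul_le_mul_of_nonneg_right (fib y) (hf y)
    _ ≤ ∑ y : ZMod m, (Dz t : ℝ) * f y := by
        refine Finset.sum_le_sum_of_subset_of_nonneg (Finset.subset_univ _) fun y _ _ => ?_
        exact mul_nonneg (Nat.cast_nonneg _) (hf y)
    _ = (Dz t : ℝ) * ∑ y : ZMod m, f y := by rw [Finset.mul_sum]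

lemma sum_unit_mul (a : ZMod m) (ha : IsUnit a) (f : ZMod m → ℝ) :
    ∑ t : ZMod m, f (t * a) = ∑ y : ZMod m, f y := by
  apply Fintype.sum_bijective (· * a) (Units.mulRight ha.unit).bijective
  intro t
  rfl

lemma sum_neg (f : ZMod m → ℝ) : ∑ t : ZMod m, f (-t) = ∑ y : ZMod m, f y := by
  apply Fintype.sum_bijective (fun t : ZMod m => -t) neg_involutive.bijective
  intro t
  rfl


noncomputable def Jset (A S2 P2 : Finset (ZMod m)) :
    Finset ((ZMod m × ZMod m) × (ZMod m × ZMod m)) :=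
  ((A ×ˢ S2) ×ˢ (A ×ˢ P2)).filter (fun q => q.1.1 * (q.1.2 - q.2.1) = q.2.2)

open Pointwise in
lemma card_le_Jset (A : Finset (ZMod m)) :
    A.card ^ 3 ≤ (Jset A (A + A) (A * A)).card := by
  classical
  have h : ((A ×ˢ A) ×ˢ A).card ≤ (Jset A (A + A) (A * A)).card := by
    apply Finset.card_le_card_of_injOn
      (fun p => ((p.1.1, p.1.2 + p.2), (p.2, p.1.1 * p.1.2)))
    · rintro ⟨⟨a, b⟩, c⟩ hp
      simp only [Finset.mem_coe, Finset.mem_product] at hp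
      obtain ⟨⟨ha, hb⟩, hc⟩ := hp
      rw [Finset.mem_coe, Jset, Finset.mem_filter]
      refine ⟨?_, ?_⟩
      · simp only [Finset.mem_product]
        exact ⟨⟨ha, Finset.add_mem_add hb hc⟩, ⟨hc, Finset.mul_mem_mul ha hb⟩⟩
      · simp only
        rw [add_sub_cancel_right]
    · rintro ⟨⟨a, b⟩, c⟩ _ ⟨⟨a', b'⟩, c'⟩ _ h
      simp only [Prod.mk.injEq] at h
      obtain ⟨⟨h1, h2⟩, h3, _⟩ := h
      subst h1 h3
      have hb : b = b' := by
        have := add_right_cancel h2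
        exact this
      subst hb
      rfl
  calc A.card ^ 3 = ((A ×ˢ A) ×ˢ A).card := by
        rw [Finset.card_product, Finset.card_product]; ring
    _ ≤ _ := h

lemma key_identity (A S2 P2 : Finset (ZMod m)) :
    (m : ℂ) * (Jset A S2 P2).card =
      ∑ t : ZMod m,
        (∑ a ∈ A, (∑ s ∈ S2, ψ ((t * a) * s)) * (∑ c ∈ A, ψ (-((t * a) * c)))) *
          (∑ u ∈ P2, ψ (-(t * u))) := by
  classical
  have hsplit : ∀ t a s c u : ZMod m,
      ψ (t * (a * (s - c) - u)) = (ψ ((t * a) * s) * ψ (-((t * a) * c))) * ψ (-(t * u)) := by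
    intro t a s c u
    rw [← ψ_add, ← ψ_add]
    exact congrArg ψ (by ring)
  calc (m : ℂ) * (Jset A S2 P2).card
      = ∑ p ∈ (A ×ˢ S2) ×ˢ (A ×ˢ P2),
          (if p.1.1 * (p.1.2 - p.2.1) = p.2.2 then (m : ℂ) else 0) := by
        rw [← Finset.sum_filter, Finset.sum_const, nsmul_eq_mul, Jset, mul_comm]
    _ = ∑ a ∈ A, ∑ s ∈ S2, ∑ c ∈ A, ∑ u ∈ P2,
          (if a * (s - c) = u then (m : ℂ) else 0) := by
        rw [Finset.sum_product, Finset.sum_product]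
        refine Finset.sum_congr rfl fun a _ => ?_
        refine Finset.sum_congr rfl fun s _ => ?_
        rw [Finset.sum_product]
    _ = ∑ a ∈ A, ∑ s ∈ S2, ∑ c ∈ A, ∑ u ∈ P2, ∑ t : ZMod m,
          ψ (t * (a * (s - c) - u)) := by
        refine Finset.sum_congr rfl fun a _ => Finset.sum_congr rfl fun s _ =>
          Finset.sum_congr rfl fun c _ => Finset.sum_congr rfl fun u _ => ?_
        rw [sum_ψ]
        simp [sub_eq_zero]
    _ = ∑ a ∈ A, ∑ s ∈ S2, ∑ c ∈ A, ∑ t : ZMod m, ∑ u ∈ P2,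
          ψ (t * (a * (s - c) - u)) := by
        refine Finset.sum_congr rfl fun a _ => Finset.sum_congr rfl fun s _ =>
          Finset.sum_congr rfl fun c _ => ?_
        exact Finset.sum_comm
    _ = ∑ a ∈ A, ∑ s ∈ S2, ∑ t : ZMod m, ∑ c ∈ A, ∑ u ∈ P2,
          ψ (t * (a * (s - c) - u)) := by
        refine Finset.sum_congr rfl fun a _ => Finset.sum_congr rfl fun s _ => ?_
        exact Finset.sum_comm
    _ = ∑ a ∈ A, ∑ t : ZMod m, ∑ s ∈ S2, ∑ c ∈ A, ∑ u ∈ P2,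
          ψ (t * (a * (s - c) - u)) := by
        refine Finset.sum_congr rfl fun a _ => ?_
        exact Finset.sum_comm
    _ = ∑ t : ZMod m, ∑ a ∈ A, ∑ s ∈ S2, ∑ c ∈ A, ∑ u ∈ P2,
          ψ (t * (a * (s - c) - u)) := Finset.sum_comm
    _ = ∑ t : ZMod m,
        (∑ a ∈ A, (∑ s ∈ S2, ψ ((t * a) * s)) * (∑ c ∈ A, ψ (-((t * a) * c)))) *
          (∑ u ∈ P2, ψ (-(t * u))) := by
        refine Finset.sum_congr rfl fun t _ => ?_
        rw [Finset.sum_mul]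
        refine Finset.sum_congr rfl fun a _ => ?_
        rw [Finset.sum_mul_sum, Finset.sum_mul]
        refine Finset.sum_congr rfl fun s _ => ?_
        rw [Finset.sum_mul]
        refine Finset.sum_congr rfl fun c _ => ?_
        rw [Finset.mul_sum]
        refine Finset.sum_congr rfl fun u _ => ?_
        exact hsplit t a s c u


lemma key_identity' (A S2 P2 : Finset (ZMod m)) :
    (m : ℂ) * (Jset A S2 P2).card =
      ∑ t : ZMod m, (∑ a ∈ A, V S2 (t * a) * V A (-(t * a))) * V P2 (-t) := by
  rw [key_identity]
  simp only [V]
  refine Finset.sum_congr rfl fun t _ => ?_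
  congr 1
  · refine Finset.sum_congr rfl fun a _ => ?_
    congr 1
    refine Finset.sum_congr rfl fun c _ => congrArg ψ (by ring)
  · refine Finset.sum_congr rfl fun u _ => congrArg ψ (by ring)

lemma V_zero (B : Finset (ZMod m)) : V B (0 : ZMod m) = (B.card : ℂ) := by
  rw [V]
  simp [ψ_zero]

set_option maxHeartbeats 2000000 in
open Pointwise in
lemma main_estimate (A : Finset (ZMod m)) (hU : ∀ a ∈ A, IsUnit a) :
    (m : ℝ) * (A.card : ℝ) ^ 3 ≤
      (A.card : ℝ) ^ 2 * ((A + A).card : ℝ) * ((A * A).card : ℝ) +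
        (∑ d ∈ m.divisors.filter (· < m), Real.sqrt d) *
          (Real.sqrt ((m : ℝ) * (A.card : ℝ)) *
            (Real.sqrt ((A.card : ℝ) * ((m : ℝ) * ((A + A).card : ℝ))) *
              Real.sqrt ((m : ℝ) * ((A * A).card : ℝ)))) := by
  classical
  set f : ZMod m → ℂ :=
    fun t => (∑ a ∈ A, V (A + A) (t * a) * V A (-(t * a))) * V (A * A) (-t) with hfdef
  have hJ3 : (A.card : ℝ) ^ 3 ≤ ((Jset A (A + A) (A * A)).card : ℝ) := by
    exact_mod_cast card_le_Jset A
  have hf0 : f 0 = ((A.card : ℂ) ^ 2 * ((A + A).card : ℂ) * ((A * A).card : ℂ)) := by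
    rw [hfdef]
    simp only [zero_mul, neg_zero, V_zero]
    rw [Finset.sum_const, nsmul_eq_mul]
    ring
  have hid : (m : ℂ) * ((Jset A (A + A) (A * A)).card : ℂ)
      = f 0 + ∑ t ∈ Finset.univ.erase 0, f t := by
    rw [key_identity' A (A + A) (A * A),
      Finset.add_sum_erase Finset.univ f (Finset.mem_univ 0)]
  have hR : ∑ t ∈ Finset.univ.erase 0, f t
      = (((m : ℝ) * ((Jset A (A + A) (A * A)).card : ℝ)
          - (A.card : ℝ) ^ 2 * ((A + A).card : ℝ) * ((A * A).card : ℝ) : ℝ) : ℂ) := by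
    rw [hf0] at hid
    push_cast
    linear_combination -hid
  have hre : (m : ℝ) * ((Jset A (A + A) (A * A)).card : ℝ) ≤
      (A.card : ℝ) ^ 2 * ((A + A).card : ℝ) * ((A * A).card : ℝ)
        + ‖∑ t ∈ Finset.univ.erase 0, f t‖ := by
    rw [hR, Complex.norm_real, Real.norm_eq_abs]
    have := le_abs_self ((m : ℝ) * ((Jset A (A + A) (A * A)).card : ℝ)
      - (A.card : ℝ) ^ 2 * ((A + A).card : ℝ) * ((A * A).card : ℝ))
    linarith
  have hnorm : ‖∑ t ∈ Finset.univ.erase 0, f t‖ ≤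
      ∑ t ∈ Finset.univ.erase 0,
        (∑ a ∈ A, ‖V (A + A) (t * a)‖ * ‖V A (-(t * a))‖) * ‖V (A * A) (-t)‖ := by
    refine (norm_sum_le _ _).trans (Finset.sum_le_sum fun t _ => ?_)
    rw [hfdef]
    simp only
    rw [norm_mul]
    refine mul_le_mul_of_nonneg_right ?_ (norm_nonneg _)
    refine (norm_sum_le _ _).trans (le_of_eq (Finset.sum_congr rfl fun a _ => ?_))
    rw [norm_mul]
  have hgroup : ∑ t ∈ Finset.univ.erase 0,
        (∑ a ∈ A, ‖V (A + A) (t * a)‖ * ‖V A (-(t * a))‖) * ‖V (A * A) (-t)‖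
      = ∑ d ∈ m.divisors.filter (· < m),
          ∑ t ∈ (Finset.univ.erase 0).filter (fun t => Dz t = d),
            (∑ a ∈ A, ‖V (A + A) (t * a)‖ * ‖V A (-(t * a))‖) * ‖V (A * A) (-t)‖ := by
    refine (Finset.sum_fiberwise_of_maps_to (fun t ht => ?_) _).symm
    exact Dz_mem t (Finset.mem_erase.mp ht).1
  have hperd : ∀ d ∈ m.divisors.filter (· < m),
      ∑ t ∈ (Finset.univ.erase 0).filter (fun t => Dz t = d),
          (∑ a ∈ A, ‖V (A + A) (t * a)‖ * ‖V A (-(t * a))‖) * ‖V (A * A) (-t)‖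
        ≤ Real.sqrt d * (Real.sqrt ((m : ℝ) * (A.card : ℝ)) *
            (Real.sqrt ((A.card : ℝ) * ((m : ℝ) * ((A + A).card : ℝ))) *
              Real.sqrt ((m : ℝ) * ((A * A).card : ℝ)))) := by
    intro d hd
    set Td := (Finset.univ.erase (0 : ZMod m)).filter (fun t => Dz t = d) with hTd
    have hc : ∀ t ∈ Td, ∑ a ∈ A, ‖V A (-(t * a))‖ ^ 2
        ≤ (d : ℝ) * ((m : ℝ) * (A.card : ℝ)) := by
      intro t ht
      have htd : Dz t = d := (Finset.mem_filter.mp ht).2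
      calc ∑ a ∈ A, ‖V A (-(t * a))‖ ^ 2
          = ∑ a ∈ A, (fun y => ‖V A y‖ ^ 2) ((-t) * a) := by
            exact Finset.sum_congr rfl fun a _ => by simp only [neg_mul]
        _ ≤ (Dz (-t) : ℝ) * ∑ y : ZMod m, ‖V A y‖ ^ 2 :=
            mult_bound (-t) A (fun y => ‖V A y‖ ^ 2) (fun y => sq_nonneg _)
        _ = (d : ℝ) * ((m : ℝ) * (A.card : ℝ)) := by
            rw [Dz_neg, htd, parseval]
    have hFt : ∀ t ∈ Td,
        (∑ a ∈ A, ‖V (A + A) (t * a)‖ * ‖V A (-(t * a))‖) * ‖V (A * A) (-t)‖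
          ≤ Real.sqrt (∑ a ∈ A, ‖V (A + A) (t * a)‖ ^ 2) *
              (Real.sqrt ((d : ℝ) * ((m : ℝ) * (A.card : ℝ))) * ‖V (A * A) (-t)‖) := by
      intro t ht
      rw [← mul_assoc]
      refine mul_le_mul_of_nonneg_right ?_ (norm_nonneg _)
      calc ∑ a ∈ A, ‖V (A + A) (t * a)‖ * ‖V A (-(t * a))‖
          ≤ Real.sqrt (∑ a ∈ A, ‖V (A + A) (t * a)‖ ^ 2) *
              Real.sqrt (∑ a ∈ A, ‖V A (-(t * a))‖ ^ 2) :=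
            Real.sum_mul_le_sqrt_mul_sqrt _ _ _
        _ ≤ Real.sqrt (∑ a ∈ A, ‖V (A + A) (t * a)‖ ^ 2) *
              Real.sqrt ((d : ℝ) * ((m : ℝ) * (A.card : ℝ))) := by
            refine mul_le_mul_of_nonneg_left ?_ (Real.sqrt_nonneg _)
            exact Real.sqrt_le_sqrt (hc t ht)
    have hsum1 : ∑ t ∈ Td, Real.sqrt (∑ a ∈ A, ‖V (A + A) (t * a)‖ ^ 2) *
          (Real.sqrt ((d : ℝ) * ((m : ℝ) * (A.card : ℝ))) * ‖V (A * A) (-t)‖)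
        ≤ Real.sqrt (∑ t ∈ Td, ∑ a ∈ A, ‖V (A + A) (t * a)‖ ^ 2) *
            Real.sqrt (∑ t ∈ Td,
              ((d : ℝ) * ((m : ℝ) * (A.card : ℝ))) * ‖V (A * A) (-t)‖ ^ 2) := by
      have h := Real.sum_mul_le_sqrt_mul_sqrt Td
        (fun t => Real.sqrt (∑ a ∈ A, ‖V (A + A) (t * a)‖ ^ 2))
        (fun t => Real.sqrt ((d : ℝ) * ((m : ℝ) * (A.card : ℝ))) * ‖V (A * A) (-t)‖)
      refine h.trans (le_of_eq ?_)
      congr 1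
      · congr 1
        refine Finset.sum_congr rfl fun t _ => ?_
        rw [Real.sq_sqrt (Finset.sum_nonneg fun a _ => sq_nonneg _)]
      · congr 1
        refine Finset.sum_congr rfl fun t _ => ?_
        rw [mul_pow, Real.sq_sqrt (by positivity)]
    have hG : ∑ t ∈ Td, ∑ a ∈ A, ‖V (A + A) (t * a)‖ ^ 2
        ≤ (A.card : ℝ) * ((m : ℝ) * ((A + A).card : ℝ)) := by
      rw [Finset.sum_comm]
      calc ∑ a ∈ A, ∑ t ∈ Td, ‖V (A + A) (t * a)‖ ^ 2
          ≤ ∑ a ∈ A, ∑ t : ZMod m, ‖V (A + A) (t * a)‖ ^ 2 := by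
            refine Finset.sum_le_sum fun a _ => ?_
            exact Finset.sum_le_sum_of_subset_of_nonneg (Finset.subset_univ _)
              fun t _ _ => sq_nonneg _
        _ = ∑ a ∈ A, ((m : ℝ) * ((A + A).card : ℝ)) := by
            refine Finset.sum_congr rfl fun a ha => ?_
            rw [sum_unit_mul a (hU a ha) (fun y => ‖V (A + A) y‖ ^ 2), parseval]
        _ = (A.card : ℝ) * ((m : ℝ) * ((A + A).card : ℝ)) := by
            rw [Finset.sum_const, nsmul_eq_mul]
    have hUm : ∑ t ∈ Td, ‖V (A * A) (-t)‖ ^ 2 ≤ (m : ℝ) * ((A * A).card : ℝ) := by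
      calc ∑ t ∈ Td, ‖V (A * A) (-t)‖ ^ 2
          ≤ ∑ t : ZMod m, ‖V (A * A) (-t)‖ ^ 2 :=
            Finset.sum_le_sum_of_subset_of_nonneg (Finset.subset_univ _)
              fun t _ _ => sq_nonneg _
        _ = (m : ℝ) * ((A * A).card : ℝ) := by
            rw [sum_neg (fun y => ‖V (A * A) y‖ ^ 2), parseval]
    calc ∑ t ∈ Td, (∑ a ∈ A, ‖V (A + A) (t * a)‖ * ‖V A (-(t * a))‖) * ‖V (A * A) (-t)‖
        ≤ ∑ t ∈ Td, Real.sqrt (∑ a ∈ A, ‖V (A + A) (t * a)‖ ^ 2) *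
            (Real.sqrt ((d : ℝ) * ((m : ℝ) * (A.card : ℝ))) * ‖V (A * A) (-t)‖) :=
          Finset.sum_le_sum hFt
      _ ≤ Real.sqrt (∑ t ∈ Td, ∑ a ∈ A, ‖V (A + A) (t * a)‖ ^ 2) *
            Real.sqrt (∑ t ∈ Td,
              ((d : ℝ) * ((m : ℝ) * (A.card : ℝ))) * ‖V (A * A) (-t)‖ ^ 2) := hsum1
      _ ≤ Real.sqrt ((A.card : ℝ) * ((m : ℝ) * ((A + A).card : ℝ))) *
            Real.sqrt (((d : ℝ) * ((m : ℝ) * (A.card : ℝ))) *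
              ((m : ℝ) * ((A * A).card : ℝ))) := by
          refine mul_le_mul (Real.sqrt_le_sqrt hG) (Real.sqrt_le_sqrt ?_)
            (Real.sqrt_nonneg _) (Real.sqrt_nonneg _)
          rw [← Finset.mul_sum]
          exact mul_le_mul_of_nonneg_left hUm (by positivity)
      _ = Real.sqrt d * (Real.sqrt ((m : ℝ) * (A.card : ℝ)) *
            (Real.sqrt ((A.card : ℝ) * ((m : ℝ) * ((A + A).card : ℝ))) *
              Real.sqrt ((m : ℝ) * ((A * A).card : ℝ)))) := by
          have e1 : Real.sqrt (((d : ℝ) * ((m : ℝ) * (A.card : ℝ))) *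
                ((m : ℝ) * ((A * A).card : ℝ)))
              = Real.sqrt d * (Real.sqrt ((m : ℝ) * (A.card : ℝ)) *
                  Real.sqrt ((m : ℝ) * ((A * A).card : ℝ))) := by
            rw [show ((d : ℝ) * ((m : ℝ) * (A.card : ℝ))) * ((m : ℝ) * ((A * A).card : ℝ))
                = (d : ℝ) * (((m : ℝ) * (A.card : ℝ)) * ((m : ℝ) * ((A * A).card : ℝ)))
                from by ring]
            rw [Real.sqrt_mul (by positivity : (0:ℝ) ≤ (d : ℝ))]
            rw [Real.sqrt_mul (by positivity : (0:ℝ) ≤ (m : ℝ) * (A.card : ℝ))]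
          rw [e1]
          ring
  have hsum : ‖∑ t ∈ Finset.univ.erase 0, f t‖ ≤
      (∑ d ∈ m.divisors.filter (· < m), Real.sqrt d) *
        (Real.sqrt ((m : ℝ) * (A.card : ℝ)) *
          (Real.sqrt ((A.card : ℝ) * ((m : ℝ) * ((A + A).card : ℝ))) *
            Real.sqrt ((m : ℝ) * ((A * A).card : ℝ)))) := by
    rw [Finset.sum_mul]
    refine hnorm.trans ?_
    rw [hgroup]
    exact Finset.sum_le_sum hperd
  have hmain : (m : ℝ) * ((Jset A (A + A) (A * A)).card : ℝ) ≤
      (A.card : ℝ) ^ 2 * ((A + A).card : ℝ) * ((A * A).card : ℝ) +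
        (∑ d ∈ m.divisors.filter (· < m), Real.sqrt d) *
          (Real.sqrt ((m : ℝ) * (A.card : ℝ)) *
            (Real.sqrt ((A.card : ℝ) * ((m : ℝ) * ((A + A).card : ℝ))) *
              Real.sqrt ((m : ℝ) * ((A * A).card : ℝ)))) := by
    refine hre.trans ?_
    linarith
  have hfin : (m : ℝ) * (A.card : ℝ) ^ 3
      ≤ (m : ℝ) * ((Jset A (A + A) (A * A)).card : ℝ) :=
    mul_le_mul_of_nonneg_left hJ3 (Nat.cast_nonneg _)
  exact hfin.trans hmain

end SPaux

open Pointwise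

theorem sum_product_units_zmod (m : ℕ) (hm : 2 ≤ m) (A : Finset (ZMod m))
    (hA : A.Nonempty) (hU : ∀ a ∈ A, IsUnit a) :
    ((A + A).card * (A * A).card : ℝ) ≥
      (1 / 4) * min ((m : ℝ) * A.card)
        (((A.card : ℝ) ^ 4 / m) *
          (∑ d ∈ m.divisors.filter (· < m), Real.sqrt d) ^ (-2 : ℤ)) := by
  haveI : NeZero m := ⟨by omega⟩
  have hmain := SPaux.main_estimate (m := m) A hU
  set S : ℝ := ∑ d ∈ m.divisors.filter (· < m), Real.sqrt d with hSdef
  set N : ℝ := (A.card : ℝ) with hNdef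
  set K : ℝ := ((A + A).card : ℝ) with hKdef
  set L : ℝ := ((A * A).card : ℝ) with hLdef
  have hS1 : (1 : ℝ) ≤ S := by
    have h1m : 1 ∈ m.divisors.filter (· < m) := by
      simp only [Finset.mem_filter, Nat.mem_divisors]
      exact ⟨⟨one_dvd m, by omega⟩, by omega⟩
    have h := Finset.single_le_sum (f := fun d : ℕ => Real.sqrt d)
      (fun i _ => Real.sqrt_nonneg _) h1m
    rw [hSdef]
    simpa using h
  have hS0 : (0 : ℝ) < S := lt_of_lt_of_le one_pos hS1
  have hN1 : (1 : ℝ) ≤ N := by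
    rw [hNdef]
    exact_mod_cast hA.card_pos
  have hN0 : (0 : ℝ) < N := lt_of_lt_of_le one_pos hN1
  have hm0 : (0 : ℝ) < (m : ℝ) := by
    have : (0 : ℕ) < m := by omega
    exact_mod_cast this
  have hK0 : (0 : ℝ) ≤ K := by rw [hKdef]; positivity
  have hL0 : (0 : ℝ) ≤ L := by rw [hLdef]; positivity
  -- the error term
  set E : ℝ := Real.sqrt ((m : ℝ) * N) * (Real.sqrt (N * ((m : ℝ) * K)) *
    Real.sqrt ((m : ℝ) * L)) with hEdef
  have hE0 : (0 : ℝ) ≤ E := by rw [hEdef]; positivity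
  have hE2 : E ^ 2 = ((m : ℝ) * N) * ((N * ((m : ℝ) * K)) * ((m : ℝ) * L)) := by
    rw [hEdef]
    rw [mul_pow, mul_pow]
    rw [Real.sq_sqrt (by positivity), Real.sq_sqrt (by positivity),
      Real.sq_sqrt (by positivity)]
  have hzpow : S ^ (-2 : ℤ) = (S ^ 2)⁻¹ := by
    rw [zpow_neg]
    norm_cast
  rw [ge_iff_le, hzpow]
  rcases le_or_gt ((m : ℝ) * N ^ 3) (2 * (N ^ 2 * (K * L))) with hcase | hcase
  · -- sum set and product set are large: K*L ≥ m*N/2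
    have h1 : (m : ℝ) * N ≤ 2 * (K * L) := by
      have h2 : ((m : ℝ) * N) * N ^ 2 ≤ (2 * (K * L)) * N ^ 2 := by
        calc ((m : ℝ) * N) * N ^ 2 = (m : ℝ) * N ^ 3 := by ring
          _ ≤ 2 * (N ^ 2 * (K * L)) := hcase
          _ = (2 * (K * L)) * N ^ 2 := by ring
      exact le_of_mul_le_mul_right h2 (by positivity)
    calc (1 / 4) * min ((m : ℝ) * N) (N ^ 4 / m * (S ^ 2)⁻¹)
        ≤ (1 / 4) * ((m : ℝ) * N) :=
          mul_le_mul_of_nonneg_left (min_le_left _ _) (by norm_num)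
      _ ≤ K * L := by
          have hKL0 : (0 : ℝ) ≤ K * L := mul_nonneg hK0 hL0
          linarith
  · -- the error term dominates
    have h1 : (m : ℝ) * N ^ 3 ≤ 2 * (S * E) := by
      have := hmain
      linarith
    have h2 : ((m : ℝ) * N ^ 3) ^ 2 ≤ (2 * (S * E)) ^ 2 := by
      have hl : (0 : ℝ) ≤ (m : ℝ) * N ^ 3 := by positivity
      exact pow_le_pow_left₀ hl h1 2
    have h3 : N ^ 4 * ((m : ℝ) ^ 2 * N ^ 2) ≤ (K * L * (4 * m * S ^ 2)) * ((m : ℝ) ^ 2 * N ^ 2) := by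
      have h4 : ((m : ℝ) * N ^ 3) ^ 2 = N ^ 4 * ((m : ℝ) ^ 2 * N ^ 2) := by ring
      have h5 : (2 * (S * E)) ^ 2 = 4 * S ^ 2 * E ^ 2 := by ring
      rw [h4, h5, hE2] at h2
      calc N ^ 4 * ((m : ℝ) ^ 2 * N ^ 2)
          ≤ 4 * S ^ 2 * (((m : ℝ) * N) * ((N * ((m : ℝ) * K)) * ((m : ℝ) * L))) := h2
        _ = (K * L * (4 * m * S ^ 2)) * ((m : ℝ) ^ 2 * N ^ 2) := by ring
    have h6 : N ^ 4 ≤ K * L * (4 * m * S ^ 2) :=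
      le_of_mul_le_mul_right h3 (by positivity)
    calc (1 / 4) * min ((m : ℝ) * N) (N ^ 4 / m * (S ^ 2)⁻¹)
        ≤ (1 / 4) * (N ^ 4 / m * (S ^ 2)⁻¹) :=
          mul_le_mul_of_nonneg_left (min_le_right _ _) (by norm_num)
      _ ≤ K * L := by
          have hpos : (0 : ℝ) < 4 * (m : ℝ) * S ^ 2 := by positivity
          rw [show (1 / 4 : ℝ) * (N ^ 4 / m * (S ^ 2)⁻¹) = N ^ 4 / (4 * (m : ℝ) * S ^ 2) from by
            field_simp]
          rw [div_le_iff₀ hpos]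
          linarith [h6]
end
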